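/- arXiv:math/9201232 — 6 statements merged into one kernel-verified Lean document; each statement's English description precedes it below -/
import Mathlib

section
/- Let (A₀, A₁) be a compatible couple of Banach spaces and let x = (x_i) be a finitely supported sequence with x_i ∈ A₀ + A₁ for all i. Then for every t > 0, the quantity sup { Σ_i K_{t_i}(x_i; A₀, A₁) : t_i ≥ 0, Σ_i t_i ≤ t } is at most K_t(x; ℓ₁(A₀), ℓ_∞(A₁)), where ℓ₁(A₀) is the space of absolutely summable A₀-valued sequences with norm Σ‖x_i‖_{A₀} and ℓ_∞(A₁) is the space of bounded A₁-valued sequences with the sup norm. -/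
/-!
If `x = a + b` coordinatewise with `a ∈ ℓ₁(A₀)` and `b ∈ ℓ_∞(A₁)`, then
`K_{tᵢ}(xᵢ) ≤ ‖aᵢ‖ + tᵢ ‖bᵢ‖ ≤ ‖aᵢ‖ + tᵢ sup ‖b‖`, and summing over `i` with `Σ tᵢ ≤ t`
gives `Σ K_{tᵢ}(xᵢ) ≤ ‖a‖_{ℓ₁} + t ‖b‖_{ℓ_∞}`. Finite support of `x` is what makes the
infimum defining `K_t(x; ℓ₁(A₀), ℓ_∞(A₁))` range over a nonempty set.
-/

open MeasureTheory ENNReal Set Filter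

/-- The Peetre `K_t`-functional of a compatible couple `(A₀, A₁)` of spaces
continuously embedded (via `j₀, j₁`) in a common topological vector space `V`. -/
noncomputable def Kfun {V A₀ A₁ : Type*} [AddCommGroup V] [Module ℝ V]
    [NormedAddCommGroup A₀] [NormedSpace ℝ A₀] [NormedAddCommGroup A₁] [NormedSpace ℝ A₁]
    (j₀ : A₀ →ₗ[ℝ] V) (j₁ : A₁ →ₗ[ℝ] V) (t : ℝ) (v : V) : ℝ :=
  sInf {r | ∃ (a : A₀) (b : A₁), v = j₀ a + j₁ b ∧ r = ‖a‖ + t * ‖b‖}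

/-- The `K_t`-functional of the couple `(ℓ₁(A₀), ℓ_∞(A₁))`, viewed inside the space
of `V`-valued sequences. -/
noncomputable def Kl1linf {V A₀ A₁ : Type*} [AddCommGroup V] [Module ℝ V]
    [NormedAddCommGroup A₀] [NormedSpace ℝ A₀] [NormedAddCommGroup A₁] [NormedSpace ℝ A₁]
    (j₀ : A₀ →ₗ[ℝ] V) (j₁ : A₁ →ₗ[ℝ] V) (t : ℝ) (x : ℕ → V) : ℝ :=
  sInf {r | ∃ (a : ℕ → A₀) (b : ℕ → A₁), Summable (fun i => ‖a i‖) ∧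
      BddAbove (Set.range fun i => ‖b i‖) ∧ (∀ i, x i = j₀ (a i) + j₁ (b i)) ∧
      r = (∑' i, ‖a i‖) + t * (⨆ i, ‖b i‖)}

/-- Membership in `ℓ₁(A₀) + ℓ_∞(A₁)` (as `V`-valued sequences). -/
def MemSumSeq {V A₀ A₁ : Type*} [AddCommGroup V] [Module ℝ V]
    [NormedAddCommGroup A₀] [NormedSpace ℝ A₀] [NormedAddCommGroup A₁] [NormedSpace ℝ A₁]
    (j₀ : A₀ →ₗ[ℝ] V) (j₁ : A₁ →ₗ[ℝ] V) (x : ℕ → V) : Prop :=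
  ∃ (a : ℕ → A₀) (b : ℕ → A₁), Summable (fun i => ‖a i‖) ∧
    BddAbove (Set.range fun i => ‖b i‖) ∧ ∀ i, x i = j₀ (a i) + j₁ (b i)

/-- `sup { Σᵢ K_{tᵢ}(xᵢ) : tᵢ ≥ 0, Σ tᵢ ≤ t }`. -/
noncomputable def KsupSum {V A₀ A₁ : Type*} [AddCommGroup V] [Module ℝ V]
    [NormedAddCommGroup A₀] [NormedSpace ℝ A₀] [NormedAddCommGroup A₁] [NormedSpace ℝ A₁]
    (j₀ : A₀ →ₗ[ℝ] V) (j₁ : A₁ →ₗ[ℝ] V) (t : ℝ) (x : ℕ → V) : ℝ :=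
  sSup {s | ∃ τ : ℕ → ℝ, (∀ i, 0 ≤ τ i) ∧ Summable τ ∧ (∑' i, τ i) ≤ t ∧
      Summable (fun i => Kfun j₀ j₁ (τ i) (x i)) ∧ s = ∑' i, Kfun j₀ j₁ (τ i) (x i)}

open Function

section

variable {V A₀ A₁ : Type*} [AddCommGroup V] [Module ℝ V]
  [NormedAddCommGroup A₀] [NormedSpace ℝ A₀] [NormedAddCommGroup A₁] [NormedSpace ℝ A₁]
  {j₀ : A₀ →ₗ[ℝ] V} {j₁ : A₁ →ₗ[ℝ] V}

theorem Kfun_le {τ : ℝ} (hτ : 0 ≤ τ) {v : V} {a : A₀} {b : A₁} (h : v = j₀ a + j₁ b) :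
    Kfun j₀ j₁ τ v ≤ ‖a‖ + τ * ‖b‖ :=
  csInf_le ⟨0, by rintro r ⟨a, b, -, rfl⟩; positivity⟩ ⟨a, b, h, rfl⟩

theorem Kl1linf_nonneg {t : ℝ} (ht : 0 ≤ t) (x : ℕ → V) : 0 ≤ Kl1linf j₀ j₁ t x := by
  refine Real.sInf_nonneg ?_
  rintro r ⟨a, b, -, -, -, rfl⟩
  have := Real.iSup_nonneg fun i => norm_nonneg (b i)
  have : 0 ≤ ∑' i, ‖a i‖ := tsum_nonneg fun i => norm_nonneg (a i)
  positivity

theorem finite_support_norm_indicator {ι E : Type*} [NormedAddCommGroup E] {s : Set ι}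
    (hs : s.Finite) (f : ι → E) : (support fun i => ‖s.indicator f i‖).Finite := by
  simp only [norm_indicator_eq_indicator_norm]
  exact hs.subset support_indicator_subset

theorem memSumSeq_of_finite_support {x : ℕ → V}
    (hx : ∀ i, x i ∈ LinearMap.range j₀ ⊔ LinearMap.range j₁)
    (hfin : (support x).Finite) :
    MemSumSeq j₀ j₁ x := by
  have hdec : ∀ i, ∃ (a : A₀) (b : A₁), x i = j₀ a + j₁ b := by
    intro i
    obtain ⟨_, ⟨a, rfl⟩, _, ⟨b, rfl⟩, hab⟩ := Submodule.mem_sup.mp (hx i)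
    exact ⟨a, b, hab.symm⟩
  choose a b hab using hdec
  refine ⟨(support x).indicator a, (support x).indicator b,
    summable_of_hasFiniteSupport (finite_support_norm_indicator hfin a),
    (((finite_support_norm_indicator hfin b).image _).insert 0).bddAbove.mono
      (range_subset_insert_image_support _),
    fun i => ?_⟩
  by_cases hi : i ∈ support x
  · simp only [indicator_of_mem hi, hab]
  · rw [indicator_of_notMem hi, indicator_of_notMem hi, map_zero, map_zero, add_zero]
    exact notMem_support.mp hi

theorem tsum_Kfun_le {τ : ℕ → ℝ} (hτ : ∀ i, 0 ≤ τ i) (hτs : Summable τ) {x : ℕ → V}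
    (hK : Summable fun i => Kfun j₀ j₁ (τ i) (x i)) {a : ℕ → A₀} {b : ℕ → A₁}
    (ha : Summable fun i => ‖a i‖) (hb : BddAbove (range fun i => ‖b i‖))
    (hab : ∀ i, x i = j₀ (a i) + j₁ (b i)) :
    ∑' i, Kfun j₀ j₁ (τ i) (x i) ≤ ∑' i, ‖a i‖ + (∑' i, τ i) * ⨆ i, ‖b i‖ := by
  set M := ⨆ i, ‖b i‖
  have hKle : ∀ i, Kfun j₀ j₁ (τ i) (x i) ≤ ‖a i‖ + τ i * M := fun i =>
    (Kfun_le (hτ i) (hab i)).trans (by gcongr; exacts [hτ i, le_ciSup hb i])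
  calc ∑' i, Kfun j₀ j₁ (τ i) (x i) ≤ ∑' i, (‖a i‖ + τ i * M) :=
        hK.tsum_le_tsum hKle (ha.add (hτs.mul_right M))
    _ = ∑' i, ‖a i‖ + (∑' i, τ i) * M := by
        rw [ha.tsum_add (hτs.mul_right M), tsum_mul_right]

theorem tsum_Kfun_le_Kl1linf {x : ℕ → V} (hx : MemSumSeq j₀ j₁ x) {τ : ℕ → ℝ} {t : ℝ}
    (hτ : ∀ i, 0 ≤ τ i) (hτs : Summable τ) (hτt : ∑' i, τ i ≤ t)
    (hK : Summable fun i => Kfun j₀ j₁ (τ i) (x i)) :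
    ∑' i, Kfun j₀ j₁ (τ i) (x i) ≤ Kl1linf j₀ j₁ t x := by
  obtain ⟨a, b, ha, hb, hab⟩ := hx
  refine le_csInf ⟨_, a, b, ha, hb, hab, rfl⟩ ?_
  rintro r ⟨a, b, ha, hb, hab, rfl⟩
  calc ∑' i, Kfun j₀ j₁ (τ i) (x i) ≤ ∑' i, ‖a i‖ + (∑' i, τ i) * ⨆ i, ‖b i‖ :=
        tsum_Kfun_le hτ hτs hK ha hb hab
    _ ≤ ∑' i, ‖a i‖ + t * ⨆ i, ‖b i‖ := by
        gcongr
        exact Real.iSup_nonneg fun i => norm_nonneg (b i)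

end

theorem KsupSum_le_Kl1linf_general
    {V A₀ A₁ : Type*} [AddCommGroup V] [Module ℝ V]
    [NormedAddCommGroup A₀] [NormedSpace ℝ A₀]
    [NormedAddCommGroup A₁] [NormedSpace ℝ A₁]
    (j₀ : A₀ →ₗ[ℝ] V) (j₁ : A₁ →ₗ[ℝ] V)
    (x : ℕ → V) (hx : ∀ i, x i ∈ LinearMap.range j₀ ⊔ LinearMap.range j₁)
    (hfin : Set.Finite {i | x i ≠ 0}) (t : ℝ) (ht : 0 < t) :
    KsupSum j₀ j₁ t x ≤ Kl1linf j₀ j₁ t x := by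
  refine Real.sSup_le ?_ (Kl1linf_nonneg ht.le x)
  rintro s ⟨τ, hτ, hτs, hτt, hK, rfl⟩
  exact tsum_Kfun_le_Kl1linf (memSumSeq_of_finite_support hx hfin) hτ hτs hτt hK

/-- Easy direction of Theorem 1: for finitely supported `x`,
`sup { Σᵢ K_{tᵢ}(xᵢ; A₀, A₁) : tᵢ ≥ 0, Σ tᵢ ≤ t } ≤ K_t(x; ℓ₁(A₀), ℓ_∞(A₁))`. -/
theorem KsupSum_le_Kl1linf
    {V A₀ A₁ : Type*} [AddCommGroup V] [Module ℝ V] [TopologicalSpace V]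
    [IsTopologicalAddGroup V] [ContinuousSMul ℝ V] [T2Space V]
    [NormedAddCommGroup A₀] [NormedSpace ℝ A₀] [CompleteSpace A₀]
    [NormedAddCommGroup A₁] [NormedSpace ℝ A₁] [CompleteSpace A₁]
    (j₀ : A₀ →ₗ[ℝ] V) (j₁ : A₁ →ₗ[ℝ] V)
    (hc₀ : Continuous j₀) (hc₁ : Continuous j₁)
    (hi₀ : Function.Injective j₀) (hi₁ : Function.Injective j₁)
    (x : ℕ → V) (hx : ∀ i, x i ∈ LinearMap.range j₀ ⊔ LinearMap.range j₁)
    (hfin : Set.Finite {i | x i ≠ 0}) (t : ℝ) (ht : 0 < t) :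
    KsupSum j₀ j₁ t x ≤ Kl1linf j₀ j₁ t x :=
  KsupSum_le_Kl1linf_general j₀ j₁ x hx hfin t ht
end

section
/- Let (A₀, A₁) be a compatible couple of Banach spaces. For n ∈ ℕ, let P_n denote the projection on (A₀+A₁)-valued sequences that preserves the first n coordinates and sets the rest to zero. Then for every x ∈ ℓ₁(A₀) + ℓ_∞(A₁) and every t > 0, K_t(x; ℓ₁(A₀), ℓ_∞(A₁)) = sup_n K_t(P_n x; ℓ₁(A₀), ℓ_∞(A₁)). -/
/-!
Truncating a decomposition `x = a + b` does not increase its cost `‖a‖₁ + t‖b‖_∞`, so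
`K_t(Pₙ x) ≤ K_t(x)`. Conversely, let `(Aₙ, Bₙ)` decompose `Pₙ x` with cost `≤ M`. Along a free
ultrafilter the norms `‖Aₙ i‖`, `‖Bₙ i‖` converge to some `α i`, `β i`, and each finite piece
`∑_{i ∈ s} ‖Aₙ i‖ + t‖Bₙ j‖ ≤ M` of the cost bound passes to the limit, whence
`∑ α + t sup β ≤ M`. Taking the `i`-th coordinate from some `Aₙ, Bₙ` with `n > i` whose norms
there are within `δᵢ` of `α i`, `β i` (with `∑ δᵢ` small) decomposes `x` with cost `≤ M + ε`.
-/

open MeasureTheory ENNReal Set Filter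

open Topology

theorem summable_and_tsum_add_mul_iSup_le {ι κ : Type*} [Nonempty κ] {α : ι → ℝ} {β : κ → ℝ}
    {t M : ℝ} (ht : 0 < t) (hα : 0 ≤ α) (h : ∀ (s : Finset ι) (j : κ), ∑ i ∈ s, α i + t * β j ≤ M) :
    Summable α ∧ BddAbove (range β) ∧ ∑' i, α i + t * ⨆ j, β j ≤ M := by
  have hsum_le (j : κ) (s : Finset ι) : ∑ i ∈ s, α i ≤ M - t * β j := by linarith [h s j]
  have htsum (j : κ) : ∑' i, α i + t * β j ≤ M := by
    linarith [Real.tsum_le_of_sum_le hα (hsum_le j)]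
  have hβ (j : κ) : β j ≤ (M - ∑' i, α i) / t := by
    rw [le_div_iff₀ ht]
    linarith [htsum j]
  refine ⟨summable_of_sum_le hα (hsum_le (Classical.arbitrary κ)), ⟨_, forall_mem_range.2 hβ⟩, ?_⟩
  have := mul_le_mul_of_nonneg_left (ciSup_le hβ) ht.le
  rw [mul_div_cancel₀ _ ht.ne'] at this
  linarith

theorem Ultrafilter.exists_tendsto_of_mem_Icc {ι : Type*} (U : Ultrafilter ι) {g : ι → ℝ}
    {a b : ℝ} (hg : ∀ n, g n ∈ Icc a b) : ∃ c, Tendsto g U (𝓝 c) :=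
  let ⟨c, _, hc⟩ :=
    isCompact_Icc.ultrafilter_le_nhds' (U.map g) (Ultrafilter.mem_map.2 (univ_mem' hg))
  ⟨c, hc⟩

namespace L1Linf

/-- The truncation `Pₙ`. -/
def trunc {α : Type*} [Zero α] (n : ℕ) (f : ℕ → α) : ℕ → α := fun k => if k < n then f k else 0

theorem trunc_of_lt {α : Type*} [Zero α] {n k : ℕ} (f : ℕ → α) (h : k < n) : trunc n f k = f k :=
  if_pos h

theorem norm_trunc_le {E : Type*} [SeminormedAddCommGroup E] (n : ℕ) (f : ℕ → E) (k : ℕ) :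
    ‖trunc n f k‖ ≤ ‖f k‖ := by
  unfold trunc
  split_ifs <;> simp

section Cost

variable {E F : Type*} [SeminormedAddCommGroup E] [SeminormedAddCommGroup F]
  {t : ℝ} {a : ℕ → E} {b : ℕ → F}

variable (t a b) in
noncomputable def cost : ℝ := (∑' i, ‖a i‖) + t * ⨆ i, ‖b i‖

theorem cost_nonneg (ht : 0 ≤ t) : 0 ≤ cost t a b :=
  add_nonneg (tsum_nonneg fun _ => norm_nonneg _)
    (mul_nonneg ht (Real.iSup_nonneg fun _ => norm_nonneg _))

theorem sum_add_mul_norm_le_cost (ht : 0 ≤ t) (ha : Summable fun i => ‖a i‖)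
    (hb : BddAbove (range fun i => ‖b i‖)) (s : Finset ℕ) (j : ℕ) :
    ∑ i ∈ s, ‖a i‖ + t * ‖b j‖ ≤ cost t a b :=
  add_le_add (ha.sum_le_tsum s fun _ _ => norm_nonneg _)
    (mul_le_mul_of_nonneg_left (le_ciSup hb j) ht)

theorem cost_trunc_le (ht : 0 ≤ t) (ha : Summable fun i => ‖a i‖)
    (hb : BddAbove (range fun i => ‖b i‖)) (n : ℕ) :
    cost t (trunc n a) (trunc n b) ≤ cost t a b :=
  add_le_add
    ((ha.of_nonneg_of_le (fun _ => norm_nonneg _) (norm_trunc_le n a)).tsum_le_tsum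
      (norm_trunc_le n a) ha)
    (mul_le_mul_of_nonneg_left (ciSup_le fun i => (norm_trunc_le n b i).trans (le_ciSup hb i)) ht)

end Cost

section Decomposition

variable {V A₀ A₁ : Type*} [AddCommGroup V] [Module ℝ V]
  [NormedAddCommGroup A₀] [NormedSpace ℝ A₀] [NormedAddCommGroup A₁] [NormedSpace ℝ A₁]
  {j₀ : A₀ →ₗ[ℝ] V} {j₁ : A₁ →ₗ[ℝ] V} {t M : ℝ} {x : ℕ → V} {a : ℕ → A₀} {b : ℕ → A₁}

variable (j₀ j₁) in
def IsDecomp (x : ℕ → V) (a : ℕ → A₀) (b : ℕ → A₁) : Prop :=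
  Summable (fun i => ‖a i‖) ∧ BddAbove (range fun i => ‖b i‖) ∧ ∀ i, x i = j₀ (a i) + j₁ (b i)

theorem IsDecomp.trunc (h : IsDecomp j₀ j₁ x a b) (n : ℕ) :
    IsDecomp j₀ j₁ (trunc n x) (trunc n a) (trunc n b) := by
  obtain ⟨ha, hb, hx⟩ := h
  refine ⟨ha.of_nonneg_of_le (fun _ => norm_nonneg _) (norm_trunc_le n a),
    hb.range_mono _ (norm_trunc_le n b), fun i => ?_⟩
  unfold L1Linf.trunc
  split_ifs <;> simp [hx]

theorem _root_.MemSumSeq.trunc (hx : MemSumSeq j₀ j₁ x) (n : ℕ) :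
    MemSumSeq j₀ j₁ (trunc n x) :=
  let ⟨_, _, h⟩ := hx
  ⟨_, _, IsDecomp.trunc h n⟩

theorem Kl1linf_eq_sInf :
    Kl1linf j₀ j₁ t x = sInf {r | ∃ a b, IsDecomp j₀ j₁ x a b ∧ r = cost t a b} := by
  simp only [Kl1linf, IsDecomp, cost, and_assoc]

theorem Kl1linf_le_cost (ht : 0 ≤ t) (h : IsDecomp j₀ j₁ x a b) :
    Kl1linf j₀ j₁ t x ≤ cost t a b := by
  rw [Kl1linf_eq_sInf]
  exact csInf_le ⟨0, by rintro _ ⟨a, b, -, rfl⟩; exact cost_nonneg ht⟩ ⟨a, b, h, rfl⟩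

theorem le_Kl1linf (hx : MemSumSeq j₀ j₁ x)
    (h : ∀ a b, IsDecomp j₀ j₁ x a b → M ≤ cost t a b) : M ≤ Kl1linf j₀ j₁ t x := by
  obtain ⟨a, b, hab⟩ := hx
  rw [Kl1linf_eq_sInf]
  exact le_csInf ⟨_, a, b, hab, rfl⟩ (by rintro _ ⟨a, b, hab, rfl⟩; exact h a b hab)

theorem exists_isDecomp_cost_lt (hx : MemSumSeq j₀ j₁ x) (h : Kl1linf j₀ j₁ t x < M) :
    ∃ a b, IsDecomp j₀ j₁ x a b ∧ cost t a b < M := by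
  by_contra! h'
  exact (le_Kl1linf hx h').not_gt h

theorem Kl1linf_trunc_le (ht : 0 ≤ t) (hx : MemSumSeq j₀ j₁ x) (n : ℕ) :
    Kl1linf j₀ j₁ t (trunc n x) ≤ Kl1linf j₀ j₁ t x :=
  le_Kl1linf hx fun _ _ h => (Kl1linf_le_cost ht (h.trunc n)).trans (cost_trunc_le ht h.1 h.2.1 n)

theorem Kl1linf_le_tsum_add_mul_iSup (ht : 0 ≤ t) {A : ℕ → ℕ → A₀} {B : ℕ → ℕ → A₁}
    (hAB : ∀ n, ∀ i < n, x i = j₀ (A n i) + j₁ (B n i))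
    {α β : ℕ → ℝ} (hα : Summable α) (hβ : BddAbove (range β))
    (hclose : ∀ i, ∀ η > 0, ∃ n > i, ‖A n i‖ < α i + η ∧ ‖B n i‖ < β i + η) :
    Kl1linf j₀ j₁ t x ≤ ∑' i, α i + t * ⨆ i, β i := by
  refine le_of_forall_pos_le_add fun ε hε => ?_
  set η := ε / (1 + t)
  have hη : (1 + t) * η = ε := mul_div_cancel₀ _ (by positivity)
  have hδ : HasSum (fun i : ℕ => η / 2 / 2 ^ i) η := hasSum_geometric_two' η
  have hδ_pos (i : ℕ) : 0 < η / 2 / 2 ^ i := by positivity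
  have hδ_le (i : ℕ) : η / 2 / 2 ^ i ≤ η := le_hasSum hδ i fun j _ => (hδ_pos j).le
  choose N hN hA hB using fun i => hclose i _ (hδ_pos i)
  have ha : Summable fun i => ‖A (N i) i‖ :=
    (hα.add hδ.summable).of_nonneg_of_le (fun _ => norm_nonneg _) fun i => (hA i).le
  have hb_le (i : ℕ) : ‖B (N i) i‖ ≤ (⨆ j, β j) + η :=
    (hB i).le.trans (add_le_add (le_ciSup hβ i) (hδ_le i))
  have hdec : IsDecomp j₀ j₁ x (fun i => A (N i) i) (fun i => B (N i) i) :=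
    ⟨ha, ⟨_, forall_mem_range.2 hb_le⟩, fun i => hAB (N i) i (hN i)⟩
  have hsum : ∑' i, ‖A (N i) i‖ ≤ ∑' i, α i + η := by
    rw [← hδ.tsum_eq, ← hα.tsum_add hδ.summable]
    exact ha.tsum_le_tsum (fun i => (hA i).le) (hα.add hδ.summable)
  calc Kl1linf j₀ j₁ t x ≤ cost t (fun i => A (N i) i) (fun i => B (N i) i) :=
        Kl1linf_le_cost ht hdec
    _ ≤ (∑' i, α i + η) + t * ((⨆ j, β j) + η) :=
        add_le_add hsum (mul_le_mul_of_nonneg_left (ciSup_le hb_le) ht)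
    _ = ∑' i, α i + t * (⨆ i, β i) + ε := by linear_combination hη

theorem Kl1linf_le_of_forall_trunc (ht : 0 < t)
    (h : ∀ n, ∃ a b, IsDecomp j₀ j₁ (trunc n x) a b ∧ cost t a b ≤ M) : Kl1linf j₀ j₁ t x ≤ M := by
  choose A B hdec hcost using h
  have hle (n : ℕ) (s : Finset ℕ) (j : ℕ) : ∑ i ∈ s, ‖A n i‖ + t * ‖B n j‖ ≤ M :=
    (sum_add_mul_norm_le_cost ht.le (hdec n).1 (hdec n).2.1 s j).trans (hcost n)
  have hA (n i : ℕ) : ‖A n i‖ ∈ Icc 0 M := by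
    have := hle n {i} 0
    rw [Finset.sum_singleton] at this
    exact ⟨norm_nonneg _, by linarith [mul_nonneg ht.le (norm_nonneg (B n 0))]⟩
  have hB (n j : ℕ) : ‖B n j‖ ∈ Icc 0 (M / t) := by
    have := hle n ∅ j
    rw [Finset.sum_empty, zero_add] at this
    exact ⟨norm_nonneg _, (le_div_iff₀ ht).2 (by linarith)⟩
  let U := hyperfilter ℕ
  choose α hα using fun i => U.exists_tendsto_of_mem_Icc (hA · i)
  choose β hβ using fun j => U.exists_tendsto_of_mem_Icc (hB · j)
  have hlim (s : Finset ℕ) (j : ℕ) : ∑ i ∈ s, α i + t * β j ≤ M :=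
    le_of_tendsto' ((tendsto_finsetSum s fun i _ => hα i).add ((hβ j).const_mul t))
      fun n => hle n s j
  obtain ⟨hα_sum, hβ_bdd, hαβ⟩ := summable_and_tsum_add_mul_iSup_le ht
    (fun i => ge_of_tendsto' (hα i) fun n => (hA n i).1) hlim
  have hfree (i : ℕ) : ∀ᶠ n in (U : Filter ℕ), i < n :=
    (Nat.cofinite_eq_atTop ▸ eventually_gt_atTop i).filter_mono hyperfilter_le_cofinite
  refine (Kl1linf_le_tsum_add_mul_iSup ht.le
    (fun n i hi => (trunc_of_lt x hi).symm.trans ((hdec n).2.2 i)) hα_sum hβ_bdd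
    fun i η hη => ?_).trans hαβ
  exact ((hfree i).and (((hα i).eventually_lt_const (lt_add_of_pos_right _ hη)).and
    ((hβ i).eventually_lt_const (lt_add_of_pos_right _ hη)))).exists

end Decomposition

end L1Linf

open L1Linf in
theorem Kl1linf_eq_iSup_truncations_general
    {V A₀ A₁ : Type*} [AddCommGroup V] [Module ℝ V]
    [NormedAddCommGroup A₀] [NormedSpace ℝ A₀]
    [NormedAddCommGroup A₁] [NormedSpace ℝ A₁]
    (j₀ : A₀ →ₗ[ℝ] V) (j₁ : A₁ →ₗ[ℝ] V)
    (x : ℕ → V) (hx : MemSumSeq j₀ j₁ x) (t : ℝ) (ht : 0 < t) :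
    Kl1linf j₀ j₁ t x =
      ⨆ n : ℕ, Kl1linf j₀ j₁ t (fun k => if k < n then x k else 0) := by
  have hle (n : ℕ) : Kl1linf j₀ j₁ t (trunc n x) ≤ Kl1linf j₀ j₁ t x := Kl1linf_trunc_le ht.le hx n
  refine le_antisymm (le_of_forall_pos_le_add fun ε hε =>
    Kl1linf_le_of_forall_trunc ht fun n => ?_) (ciSup_le hle)
  have hlt : Kl1linf j₀ j₁ t (trunc n x) < (⨆ n, Kl1linf j₀ j₁ t (trunc n x)) + ε :=
    (le_ciSup ⟨_, forall_mem_range.2 hle⟩ n).trans_lt (lt_add_of_pos_right _ hε)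
  obtain ⟨a, b, hab, hcost⟩ := exists_isDecomp_cost_lt (hx.trunc n) hlt
  exact ⟨a, b, hab, hcost.le⟩

/-- Theorem 2: the `K_t`-functional of `x ∈ ℓ₁(A₀) + ℓ_∞(A₁)` is the supremum of the
`K_t`-functionals of its truncations `Pₙ x`. -/
theorem Kl1linf_eq_iSup_truncations
    {V A₀ A₁ : Type*} [AddCommGroup V] [Module ℝ V] [TopologicalSpace V]
    [IsTopologicalAddGroup V] [ContinuousSMul ℝ V] [T2Space V]
    [NormedAddCommGroup A₀] [NormedSpace ℝ A₀] [CompleteSpace A₀]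
    [NormedAddCommGroup A₁] [NormedSpace ℝ A₁] [CompleteSpace A₁]
    (j₀ : A₀ →ₗ[ℝ] V) (j₁ : A₁ →ₗ[ℝ] V)
    (hc₀ : Continuous j₀) (hc₁ : Continuous j₁)
    (hi₀ : Function.Injective j₀) (hi₁ : Function.Injective j₁)
    (x : ℕ → V) (hx : MemSumSeq j₀ j₁ x) (t : ℝ) (ht : 0 < t) :
    Kl1linf j₀ j₁ t x =
      ⨆ n : ℕ, Kl1linf j₀ j₁ t (fun k => if k < n then x k else 0) :=
  Kl1linf_eq_iSup_truncations_general j₀ j₁ x hx t ht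
end

section
/- Let (Ω, μ) be a measure space and f ∈ L₁(μ) + L_∞(μ). Then for every t > 0, K_t(f; L₁(μ), L_∞(μ)) = t · f**(t), where f**(t) = t⁻¹ ∫₀ᵗ f*(s) ds and f* is the nonincreasing rearrangement of |f|. -/
open MeasureTheory ENNReal Set

/-- The `K_t`-functional of the couple `(L₁(μ), L_∞(μ))`. -/
noncomputable def Ksc {α : Type*} [MeasurableSpace α] (μ : Measure α) (t : ℝ) (f : α → ℝ) : ℝ :=
  sInf {r | ∃ g h : α → ℝ, MemLp g 1 μ ∧ MemLp h ⊤ μ ∧ f =ᵐ[μ] g + h ∧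
      r = (eLpNorm g 1 μ).toReal + t * (eLpNorm h ⊤ μ).toReal}

/-- Membership in `L₁(μ) + L_∞(μ)`. -/
def MemL1pLinf {α : Type*} [MeasurableSpace α] (μ : Measure α) (f : α → ℝ) : Prop :=
  ∃ g h : α → ℝ, MemLp g 1 μ ∧ MemLp h ⊤ μ ∧ f =ᵐ[μ] g + h

/-- The nonincreasing rearrangement `f*` of `|f|`. -/
noncomputable def rearr {α : Type*} [MeasurableSpace α] (μ : Measure α) (f : α → ℝ) (s : ℝ) : ℝ :=
  sInf {l : ℝ | 0 ≤ l ∧ μ {x | l < |f x|} ≤ ENNReal.ofReal s}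

/-!
For `c ≥ 0` the rearrangement satisfies `|{u > 0 : c < f*(u)}| = μ(c < |f|)`, so the layer-cake
formula gives `∫₀^∞ (f* - c)₊ = ∫ (|f| - c)₊ dμ`. Hence `∫₀ᵗ f* ≤ ∫ (|f| - c)₊ dμ + t c`, with
equality at `c = f*(t)` because `f*` is nonincreasing. If `f = g + h`, then `(|f| - ‖h‖_∞)₊ ≤ |g|`
bounds `∫₀ᵗ f*` by `‖g‖₁ + t ‖h‖_∞`; conversely, truncating `f` at height `f*(t)` splits it into
pieces of exactly that cost.
-/

section Rearrangement

variable {α : Type*} [MeasurableSpace α] {μ : Measure α} {f : α → ℝ}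

lemma rearr_nonneg (s : ℝ) : 0 ≤ rearr μ f s :=
  Real.sInf_nonneg fun _ hl => hl.1

-- `hs` says that the set defining `rearr μ f s` is nonempty; otherwise its `sInf` is the junk `0`.
lemma meas_lt_abs_rearr_le {s : ℝ} (hs : ∃ l ≥ 0, μ {x | l < |f x|} ≤ ENNReal.ofReal s) :
    μ {x | rearr μ f s < |f x|} ≤ ENNReal.ofReal s := by
  set a := rearr μ f s
  have hunion : {x | a < |f x|} = ⋃ n : ℕ, {x | a + 1 / (n + 1) < |f x|} := by
    ext x
    simp only [mem_ofPred_eq, mem_iUnion]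
    refine ⟨fun hx => ?_, fun ⟨n, hn⟩ => lt_trans (lt_add_of_pos_right a Nat.one_div_pos_of_nat) hn⟩
    obtain ⟨n, hn⟩ := exists_nat_one_div_lt (sub_pos.2 hx)
    exact ⟨n, by linarith⟩
  have hmono : Monotone fun n : ℕ => {x | a + 1 / (n + 1) < |f x|} := fun m n hmn x hx =>
    lt_of_le_of_lt (add_le_add_right (Nat.one_div_le_one_div hmn) a) hx
  rw [hunion, hmono.directed_le.measure_iUnion]
  refine iSup_le fun n => ?_
  obtain ⟨l, ⟨-, hl⟩, hla⟩ := Real.lt_sInf_add_pos hs (Nat.one_div_pos_of_nat (n := n))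
  exact (measure_mono fun x (hx : a + 1 / (n + 1) < |f x|) => hla.trans hx).trans hl

lemma rearr_le_iff {s l : ℝ} (hs : ∃ l ≥ 0, μ {x | l < |f x|} ≤ ENNReal.ofReal s) (hl : 0 ≤ l) :
    rearr μ f s ≤ l ↔ μ {x | l < |f x|} ≤ ENNReal.ofReal s :=
  ⟨fun hle => (measure_mono fun x (hx : l < |f x|) => hle.trans_lt hx).trans
      (meas_lt_abs_rearr_le hs),
    fun hμ => csInf_le ⟨0, fun _ hl => hl.1⟩ ⟨hl, hμ⟩⟩

lemma rearr_antitoneOn (hf : ∀ s > 0, ∃ l ≥ 0, μ {x | l < |f x|} ≤ ENNReal.ofReal s) :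
    AntitoneOn (rearr μ f) (Ioi 0) := fun u hu v hv huv =>
  (rearr_le_iff (hf v hv) (rearr_nonneg u)).2 <|
    (meas_lt_abs_rearr_le (hf u hu)).trans (ENNReal.ofReal_le_ofReal huv)

lemma Real.volume_setOf_pos_ofReal_lt (m : ℝ≥0∞) :
    volume {u : ℝ | 0 < u ∧ ENNReal.ofReal u < m} = m := by
  rcases eq_or_ne m ∞ with rfl | hm
  · simp only [ENNReal.ofReal_lt_top, and_true]
    exact Real.volume_Ioi
  · have : {u : ℝ | 0 < u ∧ ENNReal.ofReal u < m} = Ioo 0 m.toReal := by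
      ext u
      simp only [mem_ofPred_eq, mem_Ioo, and_congr_right_iff]
      exact fun hu => ENNReal.ofReal_lt_iff_lt_toReal hu.le hm
    rw [this, Real.volume_Ioo, sub_zero, ENNReal.ofReal_toReal hm]

lemma volume_restrict_lt_rearr (hf : ∀ s > 0, ∃ l ≥ 0, μ {x | l < |f x|} ≤ ENNReal.ofReal s)
    {l : ℝ} (hl : 0 ≤ l) :
    volume.restrict (Ioi 0) {u | l < rearr μ f u} = μ {x | l < |f x|} := by
  rw [Measure.restrict_apply' measurableSet_Ioi,
    ← Real.volume_setOf_pos_ofReal_lt (μ {x | l < |f x|})]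
  congr 1
  ext u
  simp only [mem_inter_iff, mem_ofPred_eq, mem_Ioi]
  constructor
  · rintro ⟨hlu, hu⟩
    exact ⟨hu, not_le.1 fun h => hlu.not_ge ((rearr_le_iff (hf u hu) hl).2 h)⟩
  · rintro ⟨hu, hlt⟩
    exact ⟨not_le.1 fun h => hlt.not_ge ((rearr_le_iff (hf u hu) hl).1 h), hu⟩

lemma lintegral_ofReal_sub_eq_lintegral_meas_lt (hf : AEMeasurable f μ) (c : ℝ) :
    ∫⁻ x, ENNReal.ofReal (f x - c) ∂μ = ∫⁻ v in Ioi 0, μ {x | c + v < f x} := by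
  have hcake := lintegral_eq_lintegral_meas_lt μ (f := fun x => max (f x - c) 0)
    (ae_of_all _ fun _ => le_max_right _ _) ((hf.sub_const c).max aemeasurable_const)
  simp only [ENNReal.ofReal_max, ENNReal.ofReal_zero, max_zero] at hcake
  rw [hcake]
  refine setLIntegral_congr_fun measurableSet_Ioi fun v (hv : 0 < v) => ?_
  congr 1
  ext x
  simp only [mem_ofPred_eq, lt_max_iff, hv.not_gt, or_false, lt_sub_iff_add_lt']

lemma lintegral_ofReal_rearr_sub (hfm : AEMeasurable f μ)
    (hf : ∀ s > 0, ∃ l ≥ 0, μ {x | l < |f x|} ≤ ENNReal.ofReal s) {c : ℝ} (hc : 0 ≤ c) :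
    ∫⁻ u in Ioi 0, ENNReal.ofReal (rearr μ f u - c) = ∫⁻ x, ENNReal.ofReal (|f x| - c) ∂μ := by
  rw [lintegral_ofReal_sub_eq_lintegral_meas_lt
      (aemeasurable_restrict_of_antitoneOn measurableSet_Ioi (rearr_antitoneOn hf)),
    lintegral_ofReal_sub_eq_lintegral_meas_lt hfm.abs]
  exact setLIntegral_congr_fun measurableSet_Ioi fun v (hv : 0 < v) =>
    volume_restrict_lt_rearr hf (by linarith)

lemma lintegral_Ioc_rearr_le (hfm : AEMeasurable f μ)
    (hf : ∀ s > 0, ∃ l ≥ 0, μ {x | l < |f x|} ≤ ENNReal.ofReal s) {c : ℝ} (hc : 0 ≤ c) (t : ℝ) :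
    ∫⁻ u in Ioc 0 t, ENNReal.ofReal (rearr μ f u)
      ≤ ∫⁻ x, ENNReal.ofReal (|f x| - c) ∂μ + ENNReal.ofReal t * ENNReal.ofReal c := by
  calc ∫⁻ u in Ioc 0 t, ENNReal.ofReal (rearr μ f u)
      ≤ ∫⁻ u in Ioc 0 t, (ENNReal.ofReal (rearr μ f u - c) + ENNReal.ofReal c) :=
        lintegral_mono fun u => by
          simpa only [sub_add_cancel] using ENNReal.ofReal_add_le (p := rearr μ f u - c) (q := c)
    _ = (∫⁻ u in Ioc 0 t, ENNReal.ofReal (rearr μ f u - c))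
          + ENNReal.ofReal t * ENNReal.ofReal c := by
        rw [lintegral_add_right _ measurable_const, setLIntegral_const, Real.volume_Ioc, sub_zero,
          mul_comm]
    _ ≤ ∫⁻ x, ENNReal.ofReal (|f x| - c) ∂μ + ENNReal.ofReal t * ENNReal.ofReal c := by
        rw [← lintegral_ofReal_rearr_sub hfm hf hc]
        exact add_le_add (lintegral_mono_set Ioc_subset_Ioi_self) le_rfl

lemma lintegral_Ioc_rearr_eq (hfm : AEMeasurable f μ)
    (hf : ∀ s > 0, ∃ l ≥ 0, μ {x | l < |f x|} ≤ ENNReal.ofReal s) {t : ℝ} (ht : 0 < t) :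
    ∫⁻ u in Ioc 0 t, ENNReal.ofReal (rearr μ f u)
      = ∫⁻ x, ENNReal.ofReal (|f x| - rearr μ f t) ∂μ
        + ENNReal.ofReal t * ENNReal.ofReal (rearr μ f t) := by
  set c := rearr μ f t
  have hc_le : ∀ u ∈ Ioc 0 t, c ≤ rearr μ f u := fun u hu =>
    rearr_antitoneOn hf hu.1 ht hu.2
  have hvanish : ∫⁻ u in Ioi t, ENNReal.ofReal (rearr μ f u - c) = 0 :=
    setLIntegral_eq_zero measurableSet_Ioi fun u (hu : t < u) =>
      ENNReal.ofReal_eq_zero.2 <| sub_nonpos.2 <| rearr_antitoneOn hf ht (ht.trans hu) hu.le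
  rw [← lintegral_ofReal_rearr_sub hfm hf (rearr_nonneg t), ← Ioc_union_Ioi_eq_Ioi ht.le,
    lintegral_union measurableSet_Ioi Ioc_disjoint_Ioi_same, hvanish, add_zero]
  calc ∫⁻ u in Ioc 0 t, ENNReal.ofReal (rearr μ f u)
      = ∫⁻ u in Ioc 0 t, (ENNReal.ofReal (rearr μ f u - c) + ENNReal.ofReal c) :=
        setLIntegral_congr_fun measurableSet_Ioc fun u hu => by
          rw [← ENNReal.ofReal_add (sub_nonneg.2 (hc_le u hu)) (rearr_nonneg t), sub_add_cancel]
    _ = (∫⁻ u in Ioc 0 t, ENNReal.ofReal (rearr μ f u - c))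
          + ENNReal.ofReal t * ENNReal.ofReal c := by
        rw [lintegral_add_right _ measurable_const, setLIntegral_const, Real.volume_Ioc, sub_zero,
          mul_comm]

lemma intervalIntegral_rearr_eq_toReal
    (hf : ∀ s > 0, ∃ l ≥ 0, μ {x | l < |f x|} ≤ ENNReal.ofReal s) {t : ℝ} (ht : 0 ≤ t) :
    ∫ s in 0..t, rearr μ f s = (∫⁻ u in Ioc 0 t, ENNReal.ofReal (rearr μ f u)).toReal := by
  rw [intervalIntegral.integral_of_le ht,
    integral_eq_lintegral_of_nonneg_ae (ae_of_all _ rearr_nonneg)]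
  exact (aemeasurable_restrict_of_antitoneOn measurableSet_Ioc
    ((rearr_antitoneOn hf).mono Ioc_subset_Ioi_self)).aestronglyMeasurable

end Rearrangement

section Decomposition

variable {α : Type*} [MeasurableSpace α] {μ : Measure α} {f g h : α → ℝ}

lemma abs_le_abs_add_lpNorm (hh : MemLp h ⊤ μ) (hfgh : f =ᵐ[μ] g + h) :
    ∀ᵐ x ∂μ, |f x| ≤ |g x| + lpNorm h ⊤ μ := by
  filter_upwards [hfgh, ae_le_lpNorm_exponent_top hh] with x hfx hhx
  rw [hfx, Pi.add_apply]
  exact (abs_add_le _ _).trans (add_le_add_right hhx _)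

lemma lintegral_ofReal_abs_eq_eLpNorm_one (g : α → ℝ) :
    ∫⁻ x, ENNReal.ofReal |g x| ∂μ = eLpNorm g 1 μ := by
  simp only [eLpNorm_one_eq_lintegral_enorm, Real.enorm_eq_ofReal_abs]

lemma MemLp.exists_meas_lt_abs_le (hg : MemLp g 1 μ) :
    ∀ s > 0, ∃ l ≥ 0, μ {x | l < |g x|} ≤ ENNReal.ofReal s := by
  intro s hs
  set l := (eLpNorm g 1 μ).toReal / s + 1 with hl_def
  have hl : 0 < l := by positivity
  refine ⟨l, hl.le, ?_⟩
  calc μ {x | l < |g x|}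
      ≤ μ {x | ENNReal.ofReal l ≤ ENNReal.ofReal |g x|} :=
        measure_mono fun x (hx : l < |g x|) => ENNReal.ofReal_le_ofReal hx.le
    _ ≤ (∫⁻ x, ENNReal.ofReal |g x| ∂μ) / ENNReal.ofReal l :=
        meas_ge_le_lintegral_div hg.1.aemeasurable.abs.ennreal_ofReal
          (ENNReal.ofReal_pos.2 hl).ne' ENNReal.ofReal_ne_top
    _ ≤ ENNReal.ofReal s := by
        rw [lintegral_ofReal_abs_eq_eLpNorm_one, ENNReal.div_le_iff (ENNReal.ofReal_pos.2 hl).ne'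
          ENNReal.ofReal_ne_top, ← ENNReal.ofReal_toReal hg.2.ne, ← ENNReal.ofReal_mul hs.le]
        refine ENNReal.ofReal_le_ofReal ?_
        rw [hl_def, mul_add, mul_div_cancel₀ _ hs.ne']
        linarith

lemma MemL1pLinf.aestronglyMeasurable (hf : MemL1pLinf μ f) : AEStronglyMeasurable f μ :=
  let ⟨_, _, hg, hh, hfgh⟩ := hf
  (hg.1.add hh.1).congr hfgh.symm

lemma MemL1pLinf.exists_meas_lt_abs_le (hf : MemL1pLinf μ f) :
    ∀ s > 0, ∃ l ≥ 0, μ {x | l < |f x|} ≤ ENNReal.ofReal s := by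
  obtain ⟨g, h, hg, hh, hfgh⟩ := hf
  intro s hs
  obtain ⟨l, hl, hμ⟩ := MemLp.exists_meas_lt_abs_le hg s hs
  refine ⟨l + lpNorm h ⊤ μ, add_nonneg hl lpNorm_nonneg, le_trans (measure_mono_ae ?_) hμ⟩
  filter_upwards [abs_le_abs_add_lpNorm hh hfgh] with x hx (hlx : l + lpNorm h ⊤ μ < |f x|)
  show l < |g x|
  linarith

lemma lintegral_ofReal_abs_sub_lpNorm_le (hh : MemLp h ⊤ μ) (hfgh : f =ᵐ[μ] g + h) :
    ∫⁻ x, ENNReal.ofReal (|f x| - lpNorm h ⊤ μ) ∂μ ≤ eLpNorm g 1 μ := by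
  rw [← lintegral_ofReal_abs_eq_eLpNorm_one]
  refine lintegral_mono_ae ?_
  filter_upwards [abs_le_abs_add_lpNorm hh hfgh] with x hx
  exact ENNReal.ofReal_le_ofReal (by linarith)

lemma lintegral_Ioc_rearr_le_eLpNorm_add (hfm : AEMeasurable f μ)
    (hf : ∀ s > 0, ∃ l ≥ 0, μ {x | l < |f x|} ≤ ENNReal.ofReal s) (hh : MemLp h ⊤ μ)
    (hfgh : f =ᵐ[μ] g + h) (t : ℝ) :
    ∫⁻ u in Ioc 0 t, ENNReal.ofReal (rearr μ f u)
      ≤ eLpNorm g 1 μ + ENNReal.ofReal t * eLpNorm h ⊤ μ := by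
  refine (lintegral_Ioc_rearr_le hfm hf lpNorm_nonneg t).trans <|
    add_le_add (lintegral_ofReal_abs_sub_lpNorm_le hh hfgh) ?_
  rw [← toReal_eLpNorm hh.1]
  gcongr
  exact ENNReal.ofReal_toReal_le

lemma abs_sub_max_min_eq (a : ℝ) {c : ℝ} (hc : 0 ≤ c) :
    |a - max (min a c) (-c)| = max (|a| - c) 0 := by
  grind [abs_le, abs_of_nonneg, abs_of_nonpos]

lemma exists_add_eLpNorm_eq_of_truncation (hfm : AEStronglyMeasurable f μ) {c : ℝ} (hc : 0 ≤ c) :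
    ∃ g h : α → ℝ, AEStronglyMeasurable g μ ∧ MemLp h ⊤ μ ∧ f = g + h ∧
      eLpNorm g 1 μ = ∫⁻ x, ENNReal.ofReal (|f x| - c) ∂μ ∧ eLpNorm h ⊤ μ ≤ ENNReal.ofReal c := by
  set h := fun x => max (min (f x) c) (-c)
  have hh_le : ∀ x, ‖h x‖ ≤ c := fun x =>
    abs_le.2 ⟨le_max_right _ _, max_le (min_le_right _ _) (by linarith)⟩
  have hhm : AEStronglyMeasurable h μ :=
    ((continuous_id.min continuous_const).max continuous_const).comp_aestronglyMeasurable hfm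
  refine ⟨f - h, h, hfm.sub hhm, memLp_top_of_bound hhm c (ae_of_all _ hh_le),
    (sub_add_cancel f h).symm, ?_, ?_⟩
  · rw [← lintegral_ofReal_abs_eq_eLpNorm_one]
    refine lintegral_congr fun x => ?_
    simp only [Pi.sub_apply, h, abs_sub_max_min_eq (f x) hc, ENNReal.ofReal_max,
      ENNReal.ofReal_zero, max_zero]
  · rw [eLpNorm_exponent_top]
    exact eLpNormEssSup_le_of_ae_bound (ae_of_all _ hh_le)

end Decomposition

lemma Ksc_eq_toReal_of_forall_le_of_exists_le {α : Type*} [MeasurableSpace α] {μ : Measure α}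
    {f : α → ℝ} {t : ℝ} {A : ℝ≥0∞} (hf : MemL1pLinf μ f) (ht : 0 ≤ t)
    (hle : ∀ g h : α → ℝ, MemLp g 1 μ → MemLp h ⊤ μ → f =ᵐ[μ] g + h →
      A ≤ eLpNorm g 1 μ + ENNReal.ofReal t * eLpNorm h ⊤ μ)
    (hge : ∃ g h : α → ℝ, AEStronglyMeasurable g μ ∧ MemLp h ⊤ μ ∧ f =ᵐ[μ] g + h ∧
      eLpNorm g 1 μ + ENNReal.ofReal t * eLpNorm h ⊤ μ ≤ A) :
    Ksc μ t f = A.toReal := by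
  have cost_ne_top {g h : α → ℝ} (hg : MemLp g 1 μ) (hh : MemLp h ⊤ μ) :
      eLpNorm g 1 μ + ENNReal.ofReal t * eLpNorm h ⊤ μ ≠ ⊤ :=
    ENNReal.add_ne_top.2 ⟨hg.2.ne, ENNReal.mul_ne_top ENNReal.ofReal_ne_top hh.2.ne⟩
  have cost_toReal {g h : α → ℝ} (hg : MemLp g 1 μ) (hh : MemLp h ⊤ μ) :
      (eLpNorm g 1 μ + ENNReal.ofReal t * eLpNorm h ⊤ μ).toReal
        = (eLpNorm g 1 μ).toReal + t * (eLpNorm h ⊤ μ).toReal := by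
    rw [ENNReal.toReal_add hg.2.ne (ENNReal.mul_ne_top ENNReal.ofReal_ne_top hh.2.ne),
      ENNReal.toReal_mul, ENNReal.toReal_ofReal ht]
  obtain ⟨g₀, h₀, hg₀, hh₀, hfgh₀⟩ := hf
  have hA : A ≠ ⊤ := ne_top_of_le_ne_top (cost_ne_top hg₀ hh₀) (hle g₀ h₀ hg₀ hh₀ hfgh₀)
  obtain ⟨g, h, hgm, hh, hfgh, hcost⟩ := hge
  have hg : MemLp g 1 μ := ⟨hgm, (le_self_add.trans hcost).trans_lt hA.lt_top⟩
  unfold Ksc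
  apply le_antisymm
  · have hbdd : BddBelow {r | ∃ g h : α → ℝ, MemLp g 1 μ ∧ MemLp h ⊤ μ ∧ f =ᵐ[μ] g + h ∧
        r = (eLpNorm g 1 μ).toReal + t * (eLpNorm h ⊤ μ).toReal} := by
      refine ⟨0, ?_⟩
      rintro _ ⟨g, h, -, -, -, rfl⟩
      positivity
    refine (csInf_le hbdd ⟨g, h, hg, hh, hfgh, rfl⟩).trans ?_
    rw [← cost_toReal hg hh]
    exact ENNReal.toReal_mono hA hcost
  · refine le_csInf ⟨_, g₀, h₀, hg₀, hh₀, hfgh₀, rfl⟩ ?_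
    rintro _ ⟨g, h, hg, hh, hfgh, rfl⟩
    rw [← cost_toReal hg hh]
    exact ENNReal.toReal_mono (cost_ne_top hg hh) (hle g h hg hh hfgh)

theorem Ksc_eq_mul_doubleStar_general {α : Type*} [MeasurableSpace α] (μ : Measure α)
    (f : α → ℝ) (hf : MemL1pLinf μ f) (t : ℝ) (ht : 0 < t) :
    Ksc μ t f = t * ((∫ s in (0:ℝ)..t, rearr μ f s) / t) := by
  have hfm := hf.aestronglyMeasurable
  have hdist := hf.exists_meas_lt_abs_le
  rw [mul_div_cancel₀ _ ht.ne', intervalIntegral_rearr_eq_toReal hdist ht.le]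
  refine Ksc_eq_toReal_of_forall_le_of_exists_le hf ht.le (fun g h _ hh hfgh =>
    lintegral_Ioc_rearr_le_eLpNorm_add hfm.aemeasurable hdist hh hfgh t) ?_
  obtain ⟨g, h, hg, hh, hfgh, hg_eq, hh_le⟩ :=
    exists_add_eLpNorm_eq_of_truncation hfm (rearr_nonneg (μ := μ) (f := f) t)
  refine ⟨g, h, hg, hh, hfgh ▸ ae_eq_refl _, ?_⟩
  rw [lintegral_Ioc_rearr_eq hfm.aemeasurable hdist ht, hg_eq]
  gcongr

/-- `K_t(f; L₁, L_∞) = t · f**(t)` where `f**(t) = t⁻¹ ∫₀ᵗ f*(s) ds`. -/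
theorem Ksc_eq_mul_doubleStar {α : Type*} [MeasurableSpace α] (μ : Measure α) [SigmaFinite μ]
    (f : α → ℝ) (hmeas : AEMeasurable f μ) (hf : MemL1pLinf μ f) (t : ℝ) (ht : 0 < t) :
    Ksc μ t f = t * ((∫ s in (0:ℝ)..t, rearr μ f s) / t) :=
  Ksc_eq_mul_doubleStar_general μ f hf t ht
end

section
/- Let (Ω, μ) be a non-atomic σ-finite measure space and let f = (f_i) ∈ L₁(μ; ℓ₁) + L_∞(μ; ℓ_∞) (equivalently, a sequence of measurable functions). Then for every t > 0, K_t(f; L₁(μ; ℓ₁), L_∞(μ; ℓ_∞)) = sup { Σ_i K_{t_i}(f_i; L₁(μ), L_∞(μ)) : t_i ≥ 0, Σ_i t_i ≤ t }. -/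
open MeasureTheory ENNReal Set

/-- The `K_t`-functional of the couple `(L₁(μ; ℓ₁), L_∞(μ; ℓ_∞))` for a sequence
`f = (fᵢ)` of measurable functions. -/
noncomputable def KscSeq {α : Type*} [MeasurableSpace α] (μ : Measure α) (t : ℝ)
    (f : ℕ → α → ℝ) : ℝ :=
  sInf {r | ∃ g h : ℕ → α → ℝ, (∀ i, f i =ᵐ[μ] g i + h i) ∧
      (∀ i, AEMeasurable (g i) μ) ∧ (∀ i, AEMeasurable (h i) μ) ∧
      (∫⁻ ω, ∑' i, ‖g i ω‖₊ ∂μ) ≠ ∞ ∧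
      essSup (fun ω => ⨆ i, (‖h i ω‖₊ : ℝ≥0∞)) μ ≠ ∞ ∧
      r = (∫⁻ ω, ∑' i, ‖g i ω‖₊ ∂μ).toReal +
        t * (essSup (fun ω => ⨆ i, (‖h i ω‖₊ : ℝ≥0∞)) μ).toReal}

/-!
Regard `f` as the single function `(i, x) ↦ f i x` on the disjoint union of copies of `α` and
let `λ` be its rearrangement at `t`: the least level with `∑ᵢ μ {|fᵢ| > λ} ≤ t`.
Truncating every `fᵢ` at height `λ` gives `K_t(f) ≤ ∑ᵢ ∫ (|fᵢ| - λ)₊ + t λ`.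
Conversely, for `λ' < λ` put `Aᵢ = {|fᵢ| > λ}` and distribute the missing mass
`t - ∑ᵢ μ Aᵢ` greedily as amounts `σᵢ ≤ μ {λ' < |fᵢ| ≤ λ}`. For every splitting `fᵢ = g + h`,
`∫_{Aᵢ} |fᵢ| + λ' σᵢ ≤ ‖g‖₁ + (μ Aᵢ + σᵢ) ‖h‖_∞`, so with `τᵢ = μ Aᵢ + σᵢ` the sum
`∑ᵢ K_{τᵢ}(fᵢ)` is at least `∑ᵢ ∫ (|fᵢ| - λ)₊ + t λ - (λ - λ') t`; let `λ' ↑ λ`.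
The reverse inequality `∑ᵢ K_{τᵢ}(fᵢ) ≤ K_t(f)` holds term by term, because
`‖hᵢ‖_∞ ≤ ‖h‖_{L_∞(ℓ_∞)}` and `∑ τᵢ ≤ t`.
-/

open Filter Topology

namespace ENNReal

theorem exists_le_tsum_eq_of_le_tsum {c : ℕ → ℝ≥0∞} {S : ℝ≥0∞} (hS : S ≤ ∑' i, c i) :
    ∃ σ : ℕ → ℝ≥0∞, σ ≤ c ∧ ∑' i, σ i = S := by
  set C : ℕ → ℝ≥0∞ := fun n => ∑ i ∈ Finset.range n, c i
  refine ⟨fun i => min (c i) (S - C i), fun i => min_le_left _ _, ?_⟩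
  -- greedy filling: the first `n` terms always add up to `min S (C n)`
  have partial_sum : ∀ n, ∑ i ∈ Finset.range n, min (c i) (S - C i) = min S (C n) := by
    intro n
    induction n with
    | zero => simp [C]
    | succ n ih =>
      rw [Finset.sum_range_succ, ih, show C (n + 1) = C n + c n from Finset.sum_range_succ _ _]
      rcases le_total S (C n) with hle | hle
      · simp [tsub_eq_zero_of_le hle, hle, le_add_right hle]
      · rw [min_eq_right hle, ← min_add_add_left, add_tsub_cancel_of_le hle, min_comm]
  rw [ENNReal.tsum_eq_iSup_nat, iSup_congr partial_sum, ← inf_iSup_eq,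
    ← ENNReal.tsum_eq_iSup_nat, inf_eq_left.mpr hS]

theorem tsum_iSup_eq_iSup_tsum {ι κ : Type*} [Preorder κ] [IsDirectedOrder κ]
    {u : κ → ι → ℝ≥0∞} (hu : Monotone u) : ∑' i, ⨆ n, u n i = ⨆ n, ∑' i, u n i := by
  simp only [ENNReal.tsum_eq_iSup_sum]
  rw [iSup_comm]
  exact iSup_congr fun s => finsetSum_iSup_of_monotone fun i _ _ hnm => hu hnm i

end ENNReal

section Scalar

variable {α : Type*} [MeasurableSpace α] {μ : Measure α}

lemma Ksc_le {t : ℝ} (ht : 0 ≤ t) {f g h : α → ℝ} (hg : MemLp g 1 μ) (hh : MemLp h ⊤ μ)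
    (hfgh : f =ᵐ[μ] g + h) :
    Ksc μ t f ≤ (eLpNorm g 1 μ).toReal + t * (eLpNorm h ⊤ μ).toReal := by
  refine csInf_le ⟨0, ?_⟩ ⟨g, h, hg, hh, hfgh, rfl⟩
  rintro r ⟨g, h, -, -, -, rfl⟩
  positivity

lemma le_Ksc {t b : ℝ} {f : α → ℝ} (hf : MemL1pLinf μ f)
    (hb : ∀ g h, MemLp g 1 μ → MemLp h ⊤ μ → f =ᵐ[μ] g + h →
      b ≤ (eLpNorm g 1 μ).toReal + t * (eLpNorm h ⊤ μ).toReal) :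
    b ≤ Ksc μ t f := by
  obtain ⟨g, h, hg, hh, hfgh⟩ := hf
  refine le_csInf ⟨_, g, h, hg, hh, hfgh, rfl⟩ ?_
  rintro r ⟨g, h, hg, hh, hfgh, rfl⟩
  exact hb g h hg hh hfgh

lemma Ksc_nonneg {t : ℝ} (ht : 0 ≤ t) {f : α → ℝ} (hf : MemL1pLinf μ f) : 0 ≤ Ksc μ t f :=
  le_Ksc hf fun _ _ _ _ _ => by positivity

lemma Ksc_congr_ae {t : ℝ} {f f' : α → ℝ} (hff' : f =ᵐ[μ] f') : Ksc μ t f = Ksc μ t f' := by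
  have hdec : ∀ g h : α → ℝ, f =ᵐ[μ] g + h ↔ f' =ᵐ[μ] g + h :=
    fun g h => ⟨hff'.symm.trans, hff'.trans⟩
  simp only [Ksc, hdec]

lemma ae_enorm_le_add_eLpNormEssSup {f g h : α → ℝ} (hfgh : f =ᵐ[μ] g + h) :
    ∀ᵐ x ∂μ, ‖f x‖ₑ ≤ ‖g x‖ₑ + eLpNormEssSup h μ := by
  filter_upwards [hfgh, ae_le_eLpNormEssSup (f := h)] with x hx hhx
  rw [hx]
  exact (enorm_add_le _ _).trans (by gcongr)

lemma setLIntegral_enorm_le {f g : α → ℝ} {β : ℝ≥0∞} (hfg : ∀ᵐ x ∂μ, ‖f x‖ₑ ≤ ‖g x‖ₑ + β)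
    (A : Set α) : ∫⁻ x in A, ‖f x‖ₑ ∂μ ≤ ∫⁻ x in A, ‖g x‖ₑ ∂μ + β * μ A := by
  rw [← setLIntegral_const, ← lintegral_add_right _ measurable_const]
  exact lintegral_mono_ae (ae_restrict_of_ae hfg)

lemma setLIntegral_enorm_add_mul_le {f g : α → ℝ} {β : ℝ≥0∞}
    (hfg : ∀ᵐ x ∂μ, ‖f x‖ₑ ≤ ‖g x‖ₑ + β) {A C : Set α} (hC : MeasurableSet C)
    (hAC : Disjoint A C) {c σ : ℝ≥0∞} (hcf : ∀ x ∈ C, c ≤ ‖f x‖ₑ) (hσ : σ ≤ μ C) :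
    ∫⁻ x in A, ‖f x‖ₑ ∂μ + c * σ ≤ ∫⁻ x, ‖g x‖ₑ ∂μ + (μ A + σ) * β := by
  have hC_int : (c - β) * μ C ≤ ∫⁻ x in C, ‖g x‖ₑ ∂μ := by
    rw [← setLIntegral_const]
    refine setLIntegral_mono_ae' hC ?_
    filter_upwards [hfg] with x hx hxC
    exact tsub_le_iff_right.mpr ((hcf x hxC).trans hx)
  have hc : c * σ ≤ ∫⁻ x in C, ‖g x‖ₑ ∂μ + σ * β :=
    calc c * σ ≤ (c - β + β) * σ := by gcongr; exact le_tsub_add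
      _ ≤ (c - β) * μ C + σ * β := by rw [add_mul, mul_comm β]; gcongr
      _ ≤ ∫⁻ x in C, ‖g x‖ₑ ∂μ + σ * β := by gcongr
  calc ∫⁻ x in A, ‖f x‖ₑ ∂μ + c * σ
      ≤ (∫⁻ x in A, ‖g x‖ₑ ∂μ + β * μ A) + (∫⁻ x in C, ‖g x‖ₑ ∂μ + σ * β) :=
        add_le_add (setLIntegral_enorm_le hfg A) hc
    _ = ∫⁻ x in A ∪ C, ‖g x‖ₑ ∂μ + (μ A + σ) * β := by
        rw [lintegral_union hC hAC]; ring
    _ ≤ ∫⁻ x, ‖g x‖ₑ ∂μ + (μ A + σ) * β := by gcongr; exact Measure.restrict_le_self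

lemma toReal_setLIntegral_enorm_add_mul_le_Ksc {f : α → ℝ} (hf : MemL1pLinf μ f)
    {A C : Set α} (hC : MeasurableSet C) (hAC : Disjoint A C) {c σ : ℝ≥0∞}
    (hcf : ∀ x ∈ C, c ≤ ‖f x‖ₑ) (hσ : σ ≤ μ C) (hfin : μ A + σ ≠ ∞) :
    (∫⁻ x in A, ‖f x‖ₑ ∂μ + c * σ).toReal ≤ Ksc μ (μ A + σ).toReal f := by
  refine le_Ksc hf fun g h hg hh hfgh => ?_
  have hbound :=
    setLIntegral_enorm_add_mul_le (ae_enorm_le_add_eLpNormEssSup hfgh) hC hAC hcf hσ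
  have hg_fin := hg.eLpNorm_ne_top
  have hh_fin := hh.eLpNorm_ne_top
  rw [eLpNorm_one_eq_lintegral_enorm] at hg_fin ⊢
  rw [eLpNorm_exponent_top] at hh_fin ⊢
  rw [← ENNReal.toReal_mul, ← ENNReal.toReal_add hg_fin (ENNReal.mul_ne_top hfin hh_fin)]
  exact ENNReal.toReal_mono (by finiteness) hbound

lemma enorm_sub_clamp (a : ℝ) {l : ℝ} (hl : 0 ≤ l) :
    ‖a - max (min a l) (-l)‖ₑ = ‖a‖ₑ - ENNReal.ofReal l := by
  have habs : |a - max (min a l) (-l)| = max (|a| - l) 0 := by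
    rcases le_total a (-l) with ha | ha
    · rw [max_eq_right ((min_le_left _ _).trans ha), abs_of_nonpos (by linarith),
        abs_of_nonpos (by linarith), max_eq_left (by linarith)]
      ring
    rcases le_total a l with ha' | ha'
    · rw [min_eq_left ha', max_eq_left ha, sub_self, abs_zero,
        max_eq_right (by rw [sub_nonpos, abs_le]; exact ⟨by linarith, ha'⟩)]
    · rw [min_eq_right ha', max_eq_left (by linarith), abs_of_nonneg (by linarith),
        abs_of_nonneg (by linarith), max_eq_left (by linarith)]
  rw [Real.enorm_eq_ofReal_abs, Real.enorm_eq_ofReal_abs, habs, ENNReal.ofReal_max,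
    ENNReal.ofReal_zero, max_eq_left zero_le, ENNReal.ofReal_sub _ hl]

lemma abs_clamp_le (a : ℝ) {l : ℝ} (hl : 0 ≤ l) : |max (min a l) (-l)| ≤ l :=
  abs_le.2 ⟨le_max_right _ _, max_le (min_le_right _ _) (by linarith)⟩

lemma setLIntegral_enorm_eq {f : α → ℝ} (hf : Measurable f) (l : ℝ) :
    ∫⁻ x in {x | l < |f x|}, ‖f x‖ₑ ∂μ =
      ∫⁻ x, (‖f x‖ₑ - ENNReal.ofReal l) ∂μ + ENNReal.ofReal l * μ {x | l < |f x|} := by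
  have hA : MeasurableSet {x | l < |f x|} := measurableSet_lt measurable_const hf.abs
  have hsupp : (fun x => ‖f x‖ₑ - ENNReal.ofReal l).support ⊆ {x | l < |f x|} := by
    intro x hx
    rw [Function.mem_support, ne_eq, tsub_eq_zero_iff_le, not_le, Real.enorm_eq_ofReal_abs,
      ENNReal.ofReal_lt_ofReal_iff'] at hx
    exact hx.1
  rw [← setLIntegral_eq_of_support_subset hsupp, ← setLIntegral_const,
    ← lintegral_add_right _ measurable_const]
  refine setLIntegral_congr_fun hA fun x (hx : l < |f x|) => (tsub_add_cancel_of_le ?_).symm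
  rw [Real.enorm_eq_ofReal_abs]
  exact ENNReal.ofReal_le_ofReal hx.le

end Scalar

section Sequence

variable {α : Type*} [MeasurableSpace α] {μ : Measure α}

noncomputable def seqL1Norm (μ : Measure α) (g : ℕ → α → ℝ) : ℝ≥0∞ :=
  ∫⁻ ω, ∑' i, ‖g i ω‖ₑ ∂μ

noncomputable def seqLinfNorm (μ : Measure α) (h : ℕ → α → ℝ) : ℝ≥0∞ :=
  essSup (fun ω => ⨆ i, ‖h i ω‖ₑ) μ

/-- `f = g + h` with `g ∈ L₁(μ; ℓ₁)` and `h ∈ L_∞(μ; ℓ_∞)`. -/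
structure IsSeqDecomp (μ : Measure α) (f g h : ℕ → α → ℝ) : Prop where
  ae_eq : ∀ i, f i =ᵐ[μ] g i + h i
  aemeasurable_left : ∀ i, AEMeasurable (g i) μ
  aemeasurable_right : ∀ i, AEMeasurable (h i) μ
  seqL1Norm_ne_top : seqL1Norm μ g ≠ ∞
  seqLinfNorm_ne_top : seqLinfNorm μ h ≠ ∞

def sumKscSet (μ : Measure α) (t : ℝ) (f : ℕ → α → ℝ) : Set ℝ :=
  {s | ∃ τ : ℕ → ℝ, (∀ i, 0 ≤ τ i) ∧ Summable τ ∧ (∑' i, τ i) ≤ t ∧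
    Summable (fun i => Ksc μ (τ i) (f i)) ∧ s = ∑' i, Ksc μ (τ i) (f i)}

lemma KscSeq_le {t : ℝ} (ht : 0 ≤ t) {f g h : ℕ → α → ℝ} (hd : IsSeqDecomp μ f g h) :
    KscSeq μ t f ≤ (seqL1Norm μ g).toReal + t * (seqLinfNorm μ h).toReal := by
  obtain ⟨hfgh, hg, hh, hG, hM⟩ := hd
  refine csInf_le ⟨0, ?_⟩ ⟨g, h, hfgh, hg, hh, hG, hM, rfl⟩
  rintro r ⟨g, h, -, -, -, -, -, rfl⟩
  positivity

lemma le_KscSeq {t b : ℝ} {f : ℕ → α → ℝ} (hf : ∃ g h, IsSeqDecomp μ f g h)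
    (hb : ∀ g h, IsSeqDecomp μ f g h →
      b ≤ (seqL1Norm μ g).toReal + t * (seqLinfNorm μ h).toReal) :
    b ≤ KscSeq μ t f := by
  obtain ⟨g, h, hfgh, hg, hh, hG, hM⟩ := hf
  refine le_csInf ⟨_, g, h, hfgh, hg, hh, hG, hM, rfl⟩ ?_
  rintro r ⟨g, h, hfgh, hg, hh, hG, hM, rfl⟩
  exact hb g h ⟨hfgh, hg, hh, hG, hM⟩

lemma KscSeq_congr_ae {t : ℝ} {f f' : ℕ → α → ℝ} (hff' : ∀ i, f i =ᵐ[μ] f' i) :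
    KscSeq μ t f = KscSeq μ t f' := by
  have hdec : ∀ g h : ℕ → α → ℝ, (∀ i, f i =ᵐ[μ] g i + h i) ↔ (∀ i, f' i =ᵐ[μ] g i + h i) :=
    fun g h => forall_congr' fun i => ⟨(hff' i).symm.trans, (hff' i).trans⟩
  simp only [KscSeq, hdec]

lemma KscSeq_le_tsum_lintegral_sub {t l : ℝ} (ht : 0 ≤ t) (hl : 0 ≤ l) {f : ℕ → α → ℝ}
    (hf : ∀ i, Measurable (f i)) (hfin : ∑' i, ∫⁻ x, (‖f i x‖ₑ - ENNReal.ofReal l) ∂μ ≠ ∞) :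
    KscSeq μ t f ≤ (∑' i, ∫⁻ x, (‖f i x‖ₑ - ENNReal.ofReal l) ∂μ).toReal + t * l := by
  set h : ℕ → α → ℝ := fun i x => max (min (f i x) l) (-l)
  set g : ℕ → α → ℝ := fun i x => f i x - h i x
  have hh : ∀ i, Measurable (h i) := fun i => ((hf i).min measurable_const).max measurable_const
  have hG : seqL1Norm μ g = ∑' i, ∫⁻ x, (‖f i x‖ₑ - ENNReal.ofReal l) ∂μ := by
    rw [seqL1Norm, lintegral_tsum (f := fun i ω => ‖g i ω‖ₑ)
      fun i => ((hf i).sub (hh i)).enorm.aemeasurable]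
    simp only [g, h, enorm_sub_clamp _ hl]
  have hM : seqLinfNorm μ h ≤ ENNReal.ofReal l :=
    essSup_le_of_ae_le _ <| ae_of_all _ fun x => iSup_le fun i => by
      rw [Real.enorm_eq_ofReal_abs]
      exact ENNReal.ofReal_le_ofReal (abs_clamp_le _ hl)
  have hd : IsSeqDecomp μ f g h :=
    ⟨fun i => ae_of_all _ fun x => (sub_add_cancel _ _).symm,
      fun i => ((hf i).sub (hh i)).aemeasurable, fun i => (hh i).aemeasurable,
      hG ▸ hfin, ne_top_of_le_ne_top ENNReal.ofReal_ne_top hM⟩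
  refine (KscSeq_le ht hd).trans ?_
  rw [hG]
  gcongr
  exact ENNReal.toReal_le_of_le_ofReal hl hM

lemma eLpNormEssSup_le_seqLinfNorm (h : ℕ → α → ℝ) (i : ℕ) :
    eLpNormEssSup (h i) μ ≤ seqLinfNorm μ h :=
  essSup_mono_ae (ae_of_all _ fun x => le_iSup (fun j => ‖h j x‖ₑ) i)

namespace IsSeqDecomp

variable {f g h : ℕ → α → ℝ}

lemma tsum_lintegral_enorm (hd : IsSeqDecomp μ f g h) :
    ∑' i, ∫⁻ x, ‖g i x‖ₑ ∂μ = seqL1Norm μ g :=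
  (lintegral_tsum fun i => (hd.aemeasurable_left i).enorm).symm

lemma tsum_lintegral_enorm_ne_top (hd : IsSeqDecomp μ f g h) :
    ∑' i, ∫⁻ x, ‖g i x‖ₑ ∂μ ≠ ∞ :=
  hd.tsum_lintegral_enorm ▸ hd.seqL1Norm_ne_top

lemma memLp_one (hd : IsSeqDecomp μ f g h) (i : ℕ) : MemLp (g i) 1 μ :=
  ⟨(hd.aemeasurable_left i).aestronglyMeasurable, by
    rw [eLpNorm_one_eq_lintegral_enorm]
    exact (ENNReal.le_tsum i).trans_lt hd.tsum_lintegral_enorm_ne_top.lt_top⟩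

lemma memLp_top (hd : IsSeqDecomp μ f g h) (i : ℕ) : MemLp (h i) ⊤ μ :=
  ⟨(hd.aemeasurable_right i).aestronglyMeasurable, by
    rw [eLpNorm_exponent_top]
    exact (eLpNormEssSup_le_seqLinfNorm h i).trans_lt hd.seqLinfNorm_ne_top.lt_top⟩

lemma memL1pLinf (hd : IsSeqDecomp μ f g h) (i : ℕ) : MemL1pLinf μ (f i) :=
  ⟨g i, h i, hd.memLp_one i, hd.memLp_top i, hd.ae_eq i⟩

lemma ae_enorm_le (hd : IsSeqDecomp μ f g h) (i : ℕ) :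
    ∀ᵐ x ∂μ, ‖f i x‖ₑ ≤ ‖g i x‖ₑ + seqLinfNorm μ h := by
  filter_upwards [ae_enorm_le_add_eLpNormEssSup (hd.ae_eq i)] with x hx
  exact hx.trans (by gcongr; exact eLpNormEssSup_le_seqLinfNorm h i)

lemma Ksc_le (hd : IsSeqDecomp μ f g h) {τ : ℝ} (hτ : 0 ≤ τ) (i : ℕ) :
    Ksc μ τ (f i) ≤ (∫⁻ x, ‖g i x‖ₑ ∂μ).toReal + τ * (seqLinfNorm μ h).toReal := by
  refine (_root_.Ksc_le hτ (hd.memLp_one i) (hd.memLp_top i) (hd.ae_eq i)).trans ?_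
  rw [eLpNorm_one_eq_lintegral_enorm, eLpNorm_exponent_top]
  gcongr
  exacts [hd.seqLinfNorm_ne_top, eLpNormEssSup_le_seqLinfNorm h i]

lemma summable_Ksc (hd : IsSeqDecomp μ f g h) {τ : ℕ → ℝ} (hτ0 : ∀ i, 0 ≤ τ i)
    (hτ : Summable τ) : Summable fun i => Ksc μ (τ i) (f i) :=
  .of_nonneg_of_le (fun i => Ksc_nonneg (hτ0 i) (hd.memL1pLinf i))
    (fun i => hd.Ksc_le (hτ0 i) i)
    ((ENNReal.summable_toReal hd.tsum_lintegral_enorm_ne_top).add (hτ.mul_right _))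

lemma le_of_mem_sumKscSet (hd : IsSeqDecomp μ f g h) {t s : ℝ} (hs : s ∈ sumKscSet μ t f) :
    s ≤ (seqL1Norm μ g).toReal + t * (seqLinfNorm μ h).toReal := by
  obtain ⟨τ, hτ0, hτ, hτt, hK, rfl⟩ := hs
  have hG := ENNReal.summable_toReal hd.tsum_lintegral_enorm_ne_top
  calc ∑' i, Ksc μ (τ i) (f i)
      ≤ ∑' i, ((∫⁻ x, ‖g i x‖ₑ ∂μ).toReal + τ i * (seqLinfNorm μ h).toReal) :=
        hK.tsum_le_tsum (fun i => hd.Ksc_le (hτ0 i) i) (hG.add (hτ.mul_right _))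
    _ = (∑' i, ∫⁻ x, ‖g i x‖ₑ ∂μ).toReal + (∑' i, τ i) * (seqLinfNorm μ h).toReal := by
        rw [hG.tsum_add (hτ.mul_right _), tsum_mul_right, ENNReal.tsum_toReal_eq fun i =>
          ne_top_of_le_ne_top hd.tsum_lintegral_enorm_ne_top (ENNReal.le_tsum i)]
    _ ≤ _ := by rw [hd.tsum_lintegral_enorm]; gcongr

lemma bddAbove_sumKscSet (hd : IsSeqDecomp μ f g h) (t : ℝ) : BddAbove (sumKscSet μ t f) :=
  ⟨_, fun _ => hd.le_of_mem_sumKscSet⟩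

lemma sSup_sumKscSet_le_KscSeq (hd : IsSeqDecomp μ f g h) {t : ℝ} (ht : 0 ≤ t) :
    sSup (sumKscSet μ t f) ≤ KscSeq μ t f := by
  have hzero : ∑' i, Ksc μ 0 (f i) ∈ sumKscSet μ t f :=
    ⟨0, fun _ => le_rfl, summable_zero, by simpa using ht,
      hd.summable_Ksc (fun _ => le_rfl) summable_zero, rfl⟩
  exact csSup_le ⟨_, hzero⟩ fun s hs =>
    le_KscSeq ⟨g, h, hd⟩ fun _ _ hd' => hd'.le_of_mem_sumKscSet hs

lemma toReal_tsum_le_sSup_sumKscSet (hd : IsSeqDecomp μ f g h) {t : ℝ} (ht : 0 ≤ t)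
    {A C : ℕ → Set α} (hC : ∀ i, MeasurableSet (C i)) (hAC : ∀ i, Disjoint (A i) (C i))
    {c : ℝ≥0∞} {σ : ℕ → ℝ≥0∞} (hcf : ∀ i, ∀ x ∈ C i, c ≤ ‖f i x‖ₑ) (hσ : ∀ i, σ i ≤ μ (C i))
    (hmass : ∑' i, (μ (A i) + σ i) ≤ ENNReal.ofReal t) :
    (∑' i, (∫⁻ x in A i, ‖f i x‖ₑ ∂μ + c * σ i)).toReal ≤ sSup (sumKscSet μ t f) := by
  set m : ℕ → ℝ≥0∞ := fun i => μ (A i) + σ i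
  have hm_sum : ∑' i, m i ≠ ∞ := ne_top_of_le_ne_top ENNReal.ofReal_ne_top hmass
  have hm : ∀ i, m i ≠ ∞ := fun i => ne_top_of_le_ne_top hm_sum (ENNReal.le_tsum i)
  set τ : ℕ → ℝ := fun i => (m i).toReal
  have hτ : Summable τ := ENNReal.summable_toReal hm_sum
  have hτt : ∑' i, τ i ≤ t := by
    rw [← ENNReal.tsum_toReal_eq hm]
    exact ENNReal.toReal_le_of_le_ofReal ht hmass
  set X : ℕ → ℝ≥0∞ := fun i => ∫⁻ x in A i, ‖f i x‖ₑ ∂μ + c * σ i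
  have hX : ∀ i, X i ≤ ∫⁻ x, ‖g i x‖ₑ ∂μ + m i * seqLinfNorm μ h :=
    fun i => setLIntegral_enorm_add_mul_le (hd.ae_enorm_le i) (hC i) (hAC i) (hcf i) (hσ i)
  have hX_sum : ∑' i, X i ≠ ∞ := by
    refine ne_top_of_le_ne_top ?_ (ENNReal.tsum_le_tsum hX)
    rw [ENNReal.tsum_add, ENNReal.tsum_mul_right]
    exact ENNReal.add_ne_top.2
      ⟨hd.tsum_lintegral_enorm_ne_top, ENNReal.mul_ne_top hm_sum hd.seqLinfNorm_ne_top⟩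
  have hK : Summable fun i => Ksc μ (τ i) (f i) :=
    hd.summable_Ksc (fun _ => ENNReal.toReal_nonneg) hτ
  calc (∑' i, X i).toReal
      = ∑' i, (X i).toReal :=
        ENNReal.tsum_toReal_eq fun i => ne_top_of_le_ne_top hX_sum (ENNReal.le_tsum i)
    _ ≤ ∑' i, Ksc μ (τ i) (f i) :=
        (ENNReal.summable_toReal hX_sum).tsum_le_tsum (fun i =>
          toReal_setLIntegral_enorm_add_mul_le_Ksc (hd.memL1pLinf i) (hC i) (hAC i) (hcf i)
            (hσ i) (hm i)) hK
    _ ≤ sSup (sumKscSet μ t f) :=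
        le_csSup (hd.bddAbove_sumKscSet t) ⟨τ, fun _ => ENNReal.toReal_nonneg, hτ, hτt, hK, rfl⟩

end IsSeqDecomp

end Sequence

section Rearrangement

variable {α : Type*} [MeasurableSpace α] {μ : Measure α} {f : ℕ → α → ℝ}

/-- The distribution function of `(i, x) ↦ f i x` on the disjoint union of copies of `α`. -/
noncomputable def seqDistrib (μ : Measure α) (f : ℕ → α → ℝ) (l : ℝ) : ℝ≥0∞ :=
  ∑' i, μ {x | l < |f i x|}

/-- The analogue of `rearr` on the disjoint union of copies of `α`. -/
noncomputable def seqRearr (μ : Measure α) (f : ℕ → α → ℝ) (t : ℝ) : ℝ :=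
  sInf {l : ℝ | 0 ≤ l ∧ seqDistrib μ f l ≤ ENNReal.ofReal t}

lemma seqDistrib_antitone : Antitone (seqDistrib μ f) := fun _ _ hll' =>
  ENNReal.tsum_le_tsum fun _ => measure_mono fun _ hx => hll'.trans_lt hx

lemma seqDistrib_eq_iSup (l : ℝ) :
    seqDistrib μ f l = ⨆ n : ℕ, seqDistrib μ f (l + 1 / (n + 1)) := by
  have hsets : ∀ i, Monotone fun n : ℕ => {x | l + 1 / ((n : ℝ) + 1) < |f i x|} :=
    fun i n m hnm x (hx : l + 1 / ((n : ℝ) + 1) < |f i x|) => show _ < _ from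
      lt_of_le_of_lt (by gcongr) hx
  have hunion : ∀ i, {x | l < |f i x|} = ⋃ n : ℕ, {x | l + 1 / ((n : ℝ) + 1) < |f i x|} := by
    intro i
    ext x
    simp only [mem_ofPred_eq, mem_iUnion]
    refine ⟨fun hx => ?_, fun ⟨n, hn⟩ => lt_of_le_of_lt (by simp; positivity) hn⟩
    obtain ⟨n, hn⟩ := exists_nat_one_div_lt (sub_pos.mpr hx)
    exact ⟨n, by linarith⟩
  simp only [seqDistrib]
  rw [← ENNReal.tsum_iSup_eq_iSup_tsum fun n m hnm i => measure_mono (hsets i hnm)]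
  exact tsum_congr fun i => (hunion i).symm ▸ (hsets i).measure_iUnion

lemma seqRearr_nonneg (t : ℝ) : 0 ≤ seqRearr μ f t :=
  Real.sInf_nonneg fun _ hl => hl.1

lemma seqDistrib_seqRearr_le {t : ℝ} (hne : ∃ l, 0 ≤ l ∧ seqDistrib μ f l ≤ ENNReal.ofReal t) :
    seqDistrib μ f (seqRearr μ f t) ≤ ENNReal.ofReal t := by
  rw [seqDistrib_eq_iSup]
  refine iSup_le fun n => ?_
  obtain ⟨l, hl, hlt⟩ := exists_lt_of_csInf_lt hne
    (lt_add_of_pos_right (seqRearr μ f t) (by positivity : (0 : ℝ) < 1 / (n + 1)))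
  exact (seqDistrib_antitone hlt.le).trans hl.2

lemma lt_seqDistrib_of_lt_seqRearr {t l : ℝ} (hl0 : 0 ≤ l) (hl : l < seqRearr μ f t) :
    ENNReal.ofReal t < seqDistrib μ f l := by
  by_contra! hle
  exact hl.not_ge (csInf_le ⟨0, fun _ hl => hl.1⟩ ⟨hl0, hle⟩)

end Rearrangement

namespace IsSeqDecomp

variable {α : Type*} [MeasurableSpace α] {μ : Measure α} {f g h : ℕ → α → ℝ}

lemma exists_seqDistrib_le (hd : IsSeqDecomp μ f g h) {t : ℝ} (ht : 0 < t) :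
    ∃ l, 0 ≤ l ∧ seqDistrib μ f l ≤ ENNReal.ofReal t := by
  set G := seqL1Norm μ g
  set M := seqLinfNorm μ h
  have hG : G ≠ ∞ := hd.seqL1Norm_ne_top
  have hM : M ≠ ∞ := hd.seqLinfNorm_ne_top
  set c : ℝ := G.toReal / t + 1
  have hc : 0 < c := by positivity
  refine ⟨M.toReal + c, by positivity, ?_⟩
  -- Chebyshev: wherever `|f i| > M + c`, the `ℓ₁`-part has `‖g i‖ ≥ c`
  have hmarkov : ENNReal.ofReal c * seqDistrib μ f (M.toReal + c) ≤ G := by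
    rw [seqDistrib, ← ENNReal.tsum_mul_left]
    refine (ENNReal.tsum_le_tsum fun i => (mul_le_mul_right (measure_mono_ae ?_) _).trans
      (mul_meas_ge_le_lintegral₀ (hd.aemeasurable_left i).enorm _)).trans_eq hd.tsum_lintegral_enorm
    filter_upwards [hd.ae_enorm_le i] with x hx (hlt : _ < _)
    have hfx : M + ENNReal.ofReal c ≤ ‖f i x‖ₑ := by
      rw [← ENNReal.ofReal_toReal hM, ← ENNReal.ofReal_add ENNReal.toReal_nonneg hc.le,
        Real.enorm_eq_ofReal_abs]
      exact ENNReal.ofReal_le_ofReal hlt.le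
    rw [add_comm] at hfx
    exact (ENNReal.add_le_add_iff_right hM).1 (hfx.trans hx)
  have hG_le : G ≤ ENNReal.ofReal c * ENNReal.ofReal t := by
    rw [← ENNReal.ofReal_mul hc.le, ← ENNReal.ofReal_toReal hG]
    refine ENNReal.ofReal_le_ofReal ?_
    rw [add_mul, div_mul_cancel₀ _ ht.ne']
    linarith
  exact (ENNReal.mul_le_mul_iff_right (by positivity) ENNReal.ofReal_ne_top).1 (hmarkov.trans hG_le)

lemma tsum_lintegral_sub_ne_top (hd : IsSeqDecomp μ f g h) (hf : ∀ i, Measurable (f i))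
    {l : ℝ} (hl : seqDistrib μ f l ≠ ∞) :
    ∑' i, ∫⁻ x, (‖f i x‖ₑ - ENNReal.ofReal l) ∂μ ≠ ∞ := by
  set M := seqLinfNorm μ h
  refine ne_top_of_le_ne_top (b := ∑' i, ∫⁻ x, ‖g i x‖ₑ ∂μ + M * seqDistrib μ f l)
    (ENNReal.add_ne_top.2
      ⟨hd.tsum_lintegral_enorm_ne_top, ENNReal.mul_ne_top hd.seqLinfNorm_ne_top hl⟩) ?_
  rw [seqDistrib, ← ENNReal.tsum_mul_left, ← ENNReal.tsum_add]
  refine ENNReal.tsum_le_tsum fun i => ?_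
  calc ∫⁻ x, (‖f i x‖ₑ - ENNReal.ofReal l) ∂μ
      ≤ ∫⁻ x in {x | l < |f i x|}, ‖f i x‖ₑ ∂μ := by
        rw [setLIntegral_enorm_eq (hf i)]; exact le_self_add
    _ ≤ ∫⁻ x in {x | l < |f i x|}, ‖g i x‖ₑ ∂μ + M * μ {x | l < |f i x|} :=
        setLIntegral_enorm_le (hd.ae_enorm_le i) _
    _ ≤ ∫⁻ x, ‖g i x‖ₑ ∂μ + M * μ {x | l < |f i x|} := by
        gcongr; exact Measure.restrict_le_self

lemma toReal_le_sSup_sumKscSet_of_le (hd : IsSeqDecomp μ f g h) (hf : ∀ i, Measurable (f i))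
    {t : ℝ} (ht : 0 ≤ t) {l l' : ℝ} (hl' : l' ≤ l) {S : ℝ≥0∞}
    (hS : seqDistrib μ f l + S ≤ seqDistrib μ f l')
    (hmass : seqDistrib μ f l + S ≤ ENNReal.ofReal t) :
    (∑' i, ∫⁻ x, (‖f i x‖ₑ - ENNReal.ofReal l) ∂μ + ENNReal.ofReal l * seqDistrib μ f l +
      ENNReal.ofReal l' * S).toReal ≤ sSup (sumKscSet μ t f) := by
  have hlevel : ∀ i (l : ℝ), MeasurableSet {x | l < |f i x|} :=
    fun i l => measurableSet_lt measurable_const (hf i).abs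
  set A : ℕ → Set α := fun i => {x | l < |f i x|}
  set C : ℕ → Set α := fun i => {x | l' < |f i x|} \ A i
  have hC : ∀ i, MeasurableSet (C i) := fun i => (hlevel i l').diff (hlevel i l)
  have hAC : ∀ i, μ (A i) + μ (C i) = μ {x | l' < |f i x|} := fun i => by
    have hAB : A i ⊆ {x | l' < |f i x|} := fun x (hx : l < |f i x|) => hl'.trans_lt hx
    rw [← measure_union disjoint_sdiff_right (hC i), union_sdiff_cancel hAB]
  have hSC : S ≤ ∑' i, μ (C i) := by
    have hCsum : seqDistrib μ f l + ∑' i, μ (C i) = seqDistrib μ f l' := by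
      rw [seqDistrib, seqDistrib, ← ENNReal.tsum_add]
      exact tsum_congr hAC
    exact (ENNReal.add_le_add_iff_left (ne_top_of_le_ne_top ENNReal.ofReal_ne_top
      (le_self_add.trans hmass))).1 (hS.trans hCsum.ge)
  obtain ⟨σ, hσC, hσS⟩ := ENNReal.exists_le_tsum_eq_of_le_tsum hSC
  have hcf : ∀ i, ∀ x ∈ C i, ENNReal.ofReal l' ≤ ‖f i x‖ₑ := fun i x hx => by
    rw [Real.enorm_eq_ofReal_abs]
    exact ENNReal.ofReal_le_ofReal hx.1.le
  have key := hd.toReal_tsum_le_sSup_sumKscSet ht hC (fun i => disjoint_sdiff_right) hcf hσC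
    (by rw [ENNReal.tsum_add, hσS]; exact hmass)
  rwa [ENNReal.tsum_add, ENNReal.tsum_mul_left, hσS,
    tsum_congr fun i => setLIntegral_enorm_eq (hf i) l, ENNReal.tsum_add,
    ENNReal.tsum_mul_left] at key

lemma toReal_tsum_lintegral_sub_add_le_sSup_sumKscSet (hd : IsSeqDecomp μ f g h)
    (hf : ∀ i, Measurable (f i)) {t : ℝ} (ht : 0 < t) :
    (∑' i, ∫⁻ x, (‖f i x‖ₑ - ENNReal.ofReal (seqRearr μ f t)) ∂μ).toReal +
      t * seqRearr μ f t ≤ sSup (sumKscSet μ t f) := by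
  set lam := seqRearr μ f t
  have hlam : 0 ≤ lam := seqRearr_nonneg t
  set D := seqDistrib μ f lam
  have hD : D ≤ ENNReal.ofReal t := seqDistrib_seqRearr_le (hd.exists_seqDistrib_le ht)
  have hDfin : D ≠ ∞ := ne_top_of_le_ne_top ENNReal.ofReal_ne_top hD
  set E := ∑' i, ∫⁻ x, (‖f i x‖ₑ - ENNReal.ofReal lam) ∂μ
  have hE : E ≠ ∞ := hd.tsum_lintegral_sub_ne_top hf hDfin
  rcases hlam.eq_or_lt with hzero | hpos
  · have h0 : (E + ENNReal.ofReal lam * D + ENNReal.ofReal lam * 0).toReal ≤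
        sSup (sumKscSet μ t f) :=
      hd.toReal_le_sSup_sumKscSet_of_le hf ht.le le_rfl (by simp) (by simpa using hD)
    rw [mul_zero, add_zero, ← hzero, ENNReal.ofReal_zero, zero_mul, add_zero] at h0
    rwa [← hzero, mul_zero, add_zero]
  -- the slack `t - D` is placed where `l' < |f i| ≤ lam`, and then `l' ↑ lam`
  set V : ℝ → ℝ := fun l' => E.toReal + lam * D.toReal + l' * (t - D.toReal)
  have hV : ∀ l' ∈ Ioo 0 lam, V l' ≤ sSup (sumKscSet μ t f) := by
    rintro l' ⟨hl'0, hl'⟩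
    have hslack : D + (ENNReal.ofReal t - D) = ENNReal.ofReal t := add_tsub_cancel_of_le hD
    have h := hd.toReal_le_sSup_sumKscSet_of_le hf ht.le hl'.le
      (hslack.trans_le (lt_seqDistrib_of_lt_seqRearr hl'0.le hl').le) hslack.le
    rwa [ENNReal.toReal_add (by finiteness) (by finiteness), ENNReal.toReal_add hE (by finiteness),
      ENNReal.toReal_mul, ENNReal.toReal_mul, ENNReal.toReal_ofReal hlam,
      ENNReal.toReal_ofReal hl'0.le, ENNReal.toReal_sub_of_le hD ENNReal.ofReal_ne_top,
      ENNReal.toReal_ofReal ht.le] at h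
  have hlim : Tendsto V (𝓝[<] lam) (𝓝 (V lam)) :=
    ((by fun_prop : Continuous V).tendsto lam).mono_left nhdsWithin_le_nhds
  calc E.toReal + t * lam = V lam := by ring
    _ ≤ sSup (sumKscSet μ t f) :=
        le_of_tendsto hlim (eventually_of_mem (Ioo_mem_nhdsLT hpos) hV)

theorem KscSeq_eq_sSup_sumKscSet (hd : IsSeqDecomp μ f g h) (hf : ∀ i, Measurable (f i))
    {t : ℝ} (ht : 0 < t) : KscSeq μ t f = sSup (sumKscSet μ t f) := by
  have hD := seqDistrib_seqRearr_le (hd.exists_seqDistrib_le ht)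
  have hE := hd.tsum_lintegral_sub_ne_top hf (ne_top_of_le_ne_top ENNReal.ofReal_ne_top hD)
  refine le_antisymm ?_ (hd.sSup_sumKscSet_le_KscSeq ht.le)
  exact (KscSeq_le_tsum_lintegral_sub ht.le (seqRearr_nonneg t) hf hE).trans
    (hd.toReal_tsum_lintegral_sub_add_le_sSup_sumKscSet hf ht)

end IsSeqDecomp

theorem KscSeq_eq_sSup_general {α : Type*} [MeasurableSpace α] (μ : Measure α)
    (f : ℕ → α → ℝ) (hmeas : ∀ i, AEMeasurable (f i) μ)
    (hf : ∃ g h : ℕ → α → ℝ, (∀ i, f i =ᵐ[μ] g i + h i) ∧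
      (∀ i, AEMeasurable (g i) μ) ∧ (∀ i, AEMeasurable (h i) μ) ∧
      (∫⁻ ω, ∑' i, ‖g i ω‖₊ ∂μ) ≠ ∞ ∧
      essSup (fun ω => ⨆ i, (‖h i ω‖₊ : ℝ≥0∞)) μ ≠ ∞)
    (t : ℝ) (ht : 0 < t) :
    KscSeq μ t f =
      sSup {s | ∃ τ : ℕ → ℝ, (∀ i, 0 ≤ τ i) ∧ Summable τ ∧ (∑' i, τ i) ≤ t ∧
        Summable (fun i => Ksc μ (τ i) (f i)) ∧ s = ∑' i, Ksc μ (τ i) (f i)} := by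
  obtain ⟨g, h, hfgh, hg, hh, hG, hM⟩ := hf
  set f' : ℕ → α → ℝ := fun i => (hmeas i).mk (f i)
  have hff' : ∀ i, f i =ᵐ[μ] f' i := fun i => (hmeas i).ae_eq_mk
  have hd' : IsSeqDecomp μ f' g h := ⟨fun i => (hff' i).symm.trans (hfgh i), hg, hh, hG, hM⟩
  have hK : ∀ τ i, Ksc μ τ (f i) = Ksc μ τ (f' i) := fun τ i => Ksc_congr_ae (hff' i)
  simp only [hK, KscSeq_congr_ae hff']
  exact hd'.KscSeq_eq_sSup_sumKscSet (fun i => (hmeas i).measurable_mk) ht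

/-- For a non-atomic σ-finite measure space,
`K_t(f; L₁(μ; ℓ₁), L_∞(μ; ℓ_∞)) = sup { Σᵢ K_{tᵢ}(fᵢ; L₁(μ), L_∞(μ)) : tᵢ ≥ 0, Σ tᵢ ≤ t }`. -/
theorem KscSeq_eq_sSup {α : Type*} [MeasurableSpace α] (μ : Measure α)
    [SigmaFinite μ] [NullSingletonClass μ]
    (f : ℕ → α → ℝ) (hmeas : ∀ i, AEMeasurable (f i) μ)
    (hf : ∃ g h : ℕ → α → ℝ, (∀ i, f i =ᵐ[μ] g i + h i) ∧
      (∀ i, AEMeasurable (g i) μ) ∧ (∀ i, AEMeasurable (h i) μ) ∧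
      (∫⁻ ω, ∑' i, ‖g i ω‖₊ ∂μ) ≠ ∞ ∧
      essSup (fun ω => ⨆ i, (‖h i ω‖₊ : ℝ≥0∞)) μ ≠ ∞)
    (t : ℝ) (ht : 0 < t) :
    KscSeq μ t f =
      sSup {s | ∃ τ : ℕ → ℝ, (∀ i, 0 ≤ τ i) ∧ Summable τ ∧ (∑' i, τ i) ≤ t ∧
        Summable (fun i => Ksc μ (τ i) (f i)) ∧ s = ∑' i, Ksc μ (τ i) (f i)} :=
  KscSeq_eq_sSup_general μ f hmeas hf t ht
end

section
/- Let (Ω', μ') be a measure space and 0 < p < ∞. Define T_p : L_p(μ') → measurable functions on Ω' × (0,∞) by T_p(f)(ω', ω) = ω^{-1/p} f(ω'). Then for every f ∈ L_p(μ') and every t > 0, t^p · m({ |T_p f| > t }) = ∫ |f|^p dμ', where m = μ' × Lebesgue measure on (0,∞). Consequently ‖T_p f‖_{L_{p,∞}(m)} = ‖f‖_{L_p(μ')}, i.e. T_p is an isometric embedding of L_p into weak-L_p of the product space. -/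
open MeasureTheory ENNReal Set

/-- The weak-`L_p` quasi-norm `‖g‖_{p,∞} = sup_{t>0} t · ν(|g| > t)^{1/p}`. -/
noncomputable def wLpNorm {α : Type*} [MeasurableSpace α] (ν : Measure α) (p : ℝ)
    (g : α → ℝ) : ℝ≥0∞ :=
  ⨆ t : Set.Ioi (0:ℝ), ENNReal.ofReal t.1 * (ν {x | t.1 < |g x|}) ^ (1/p)

/-- The `L_p` norm `(∫ |f|^p dν)^{1/p}` (as an `ℝ≥0∞`-valued quantity). -/
noncomputable def LpNormR {α : Type*} [MeasurableSpace α] (ν : Measure α) (p : ℝ)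
    (f : α → ℝ) : ℝ≥0∞ :=
  (∫⁻ x, ENNReal.ofReal (|f x| ^ p) ∂ν) ^ (1/p)

/-! For fixed `ω'`, the section `{s > 0 | t < s^{-1/p} |f ω'|}` is the interval
`(0, |f ω'|^p / t^p)`, so Tonelli gives `m(|T_p f| > t) = t^{-p} ∫ |f|^p dμ'` for every
`t > 0`. Raising `t^p · m(|T_p f| > t)` to the power `1/p` then makes every term of the
supremum defining the weak-`L_p` quasi-norm equal to `‖f‖_p`. -/

lemma lt_abs_rpow_neg_inv_mul_iff {p t s : ℝ} (hp : 0 < p) (ht : 0 < t) (hs : 0 < s) (a : ℝ) :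
    t < |s ^ (-(1/p)) * a| ↔ s < |a| ^ p / t ^ p := by
  have hsp : 0 < s ^ (1/p) := Real.rpow_pos_of_pos hs _
  rw [abs_mul, abs_of_pos (Real.rpow_pos_of_pos hs _), Real.rpow_neg hs.le, inv_mul_eq_div,
    lt_div_iff₀ hsp, ← Real.rpow_lt_rpow_iff (by positivity) (abs_nonneg a) hp,
    Real.mul_rpow ht.le hsp.le, ← Real.rpow_mul hs.le, one_div_mul_cancel hp.ne', Real.rpow_one,
    lt_div_iff₀ (by positivity), mul_comm]

lemma setOf_lt_abs_rpow_neg_inv_mul_inter_Ioi {p t : ℝ} (hp : 0 < p) (ht : 0 < t) (a : ℝ) :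
    {s : ℝ | t < |s ^ (-(1/p)) * a|} ∩ Ioi 0 = Ioo 0 (|a| ^ p / t ^ p) := by
  ext s
  constructor
  · rintro ⟨hlt, hs : 0 < s⟩
    exact ⟨hs, (lt_abs_rpow_neg_inv_mul_iff hp ht hs a).1 hlt⟩
  · rintro ⟨hs, hlt⟩
    exact ⟨(lt_abs_rpow_neg_inv_mul_iff hp ht hs a).2 hlt, hs⟩

lemma volume_restrict_Ioi_setOf_lt_abs_rpow_neg_inv_mul {p t : ℝ} (hp : 0 < p) (ht : 0 < t)
    (a : ℝ) :
    volume.restrict (Ioi (0:ℝ)) {s | t < |s ^ (-(1/p)) * a|} =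
      ENNReal.ofReal (|a| ^ p / t ^ p) := by
  have hmeas : MeasurableSet {s : ℝ | t < |s ^ (-(1/p)) * a|} :=
    measurableSet_lt measurable_const (by fun_prop)
  rw [Measure.restrict_apply hmeas, setOf_lt_abs_rpow_neg_inv_mul_inter_Ioi hp ht,
    Real.volume_Ioo, sub_zero]

lemma ofReal_rpow_mul_prod_setOf_lt_abs_rpow_neg_inv_mul {Ω : Type*} [MeasurableSpace Ω]
    (μ : Measure Ω) {p t : ℝ} (hp : 0 < p) (ht : 0 < t) {f : Ω → ℝ} (hf : Measurable f) :
    ENNReal.ofReal (t ^ p) *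
        (μ.prod (volume.restrict (Ioi (0:ℝ)))) {z : Ω × ℝ | t < |z.2 ^ (-(1/p)) * f z.1|} =
      ∫⁻ ω, ENNReal.ofReal (|f ω| ^ p) ∂μ := by
  have htp : 0 < t ^ p := by positivity
  have hmeas : MeasurableSet {z : Ω × ℝ | t < |z.2 ^ (-(1/p)) * f z.1|} :=
    measurableSet_lt measurable_const (by fun_prop)
  rw [Measure.prod_apply hmeas, ← lintegral_const_mul' _ _ ofReal_ne_top]
  refine lintegral_congr fun ω => ?_
  change _ * volume.restrict _ {s : ℝ | t < |s ^ (-(1/p)) * f ω|} = _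
  rw [volume_restrict_Ioi_setOf_lt_abs_rpow_neg_inv_mul hp ht, ← ofReal_mul htp.le,
    mul_div_cancel₀ _ htp.ne']

lemma wLpNorm_eq_of_rpow_mul_measure_eq {α : Type*} [MeasurableSpace α] {ν : Measure α}
    {p : ℝ} (hp : 0 < p) {g : α → ℝ} {I : ℝ≥0∞}
    (h : ∀ t > 0, ENNReal.ofReal (t ^ p) * ν {x | t < |g x|} = I) :
    wLpNorm ν p g = I ^ (1/p) := by
  have hterm : ∀ t : Ioi (0:ℝ),
      ENNReal.ofReal t.1 * ν {x | t.1 < |g x|} ^ (1/p) = I ^ (1/p) := by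
    rintro ⟨t, ht : 0 < t⟩
    rw [← h t ht, mul_rpow_of_nonneg _ _ (by positivity),
      ofReal_rpow_of_nonneg (by positivity) (by positivity), one_div,
      Real.rpow_rpow_inv ht.le hp.ne']
  have : Nonempty (Ioi (0:ℝ)) := ⟨⟨1, mem_Ioi.2 one_pos⟩⟩
  simp only [wLpNorm, hterm, iSup_const]

theorem Tp_isometric_weakLp_general {Ω' : Type*} [MeasurableSpace Ω'] (μ' : Measure Ω')
    (p : ℝ) (hp : 0 < p) (f : Ω' → ℝ) (hmeas : Measurable f) :
    (∀ t > 0, ENNReal.ofReal (t ^ p) *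
        (μ'.prod (volume.restrict (Set.Ioi (0:ℝ))))
          {z : Ω' × ℝ | t < |Real.rpow z.2 (-(1/p)) * f z.1|} =
        ∫⁻ ω', ENNReal.ofReal (|f ω'| ^ p) ∂μ') ∧
    wLpNorm (μ'.prod (volume.restrict (Set.Ioi (0:ℝ)))) p
        (fun z => Real.rpow z.2 (-(1/p)) * f z.1) = LpNormR μ' p f := by
  have hdist := fun t (ht : t > 0) =>
    ofReal_rpow_mul_prod_setOf_lt_abs_rpow_neg_inv_mul μ' hp ht hmeas
  exact ⟨hdist, wLpNorm_eq_of_rpow_mul_measure_eq hp hdist⟩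

/-- Formulas (12)–(13): `T_p f(ω', ω) = ω^{-1/p} f(ω')` satisfies
`t^p · m(|T_p f| > t) = ∫ |f|^p dμ'` for all `t > 0`, where `m = μ' × ds` on `Ω' × (0,∞)`;
consequently `T_p` is an isometric embedding of `L_p(μ')` into weak-`L_p(m)`. -/
theorem Tp_isometric_weakLp {Ω' : Type*} [MeasurableSpace Ω'] (μ' : Measure Ω')
    (p : ℝ) (hp : 0 < p) (f : Ω' → ℝ) (hmeas : Measurable f)
    (hf : MemLp f (ENNReal.ofReal p) μ') :
    (∀ t > 0, ENNReal.ofReal (t ^ p) *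
        (μ'.prod (volume.restrict (Set.Ioi (0:ℝ))))
          {z : Ω' × ℝ | t < |Real.rpow z.2 (-(1/p)) * f z.1|} =
        ∫⁻ ω', ENNReal.ofReal (|f ω'| ^ p) ∂μ') ∧
    wLpNorm (μ'.prod (volume.restrict (Set.Ioi (0:ℝ)))) p
        (fun z => Real.rpow z.2 (-(1/p)) * f z.1) = LpNormR μ' p f :=
  Tp_isometric_weakLp_general μ' p hp f hmeas
end

section
/- Let (Ω', μ') be a measure space, 0 < p < ∞, and let ν be counting measure on the positive integers. Define S_p : L_p(μ') → measurable functions on Ω' × ℕ* by S_p(f)(ω', n) = n^{-1/p} f(ω'). Then ‖S_p f‖_{L_{p,∞}(μ' × ν)} = ‖f‖_{L_p(μ')}, and for every t > 0, (μ' × ν)({ |S_p f| > t }) = ∫ ⌊|f|^p / t^p⌋' dμ', where ⌊r⌋' denotes the number of positive integers n with n < r. -/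
open MeasureTheory ENNReal Set

lemma count_lt_set (r : ℝ) :
    (Measure.count : Measure ℕ) {n : ℕ | ((n : ℝ) + 1) < r} = (⌈r - 1⌉₊ : ℝ≥0∞) := by
  have hset : {n : ℕ | ((n : ℝ) + 1) < r} = ↑(Finset.range ⌈r - 1⌉₊) := by
    ext n
    simp only [Set.mem_setOf_eq, Finset.coe_range, Set.mem_Iio, Nat.lt_ceil]
    constructor <;> intro h <;> linarith
  rw [hset, Measure.count_apply_finset, Finset.card_range]

lemma pt_iff (p : ℝ) (hp : 0 < p) (t : ℝ) (ht : 0 < t) (c : ℝ) (hc : 0 ≤ c) (n : ℕ) :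
    (t < ((n : ℝ) + 1) ^ (-(1/p) : ℝ) * c ↔ ((n : ℝ) + 1) < c ^ p / t ^ p) := by
  set a : ℝ := (n : ℝ) + 1 with ha
  have ha0 : (0:ℝ) < a := by positivity
  have hap : (0:ℝ) < a ^ (1/p : ℝ) := Real.rpow_pos_of_pos ha0 _
  rw [Real.rpow_neg ha0.le, inv_mul_eq_div, lt_div_iff₀ hap,
    ← Real.rpow_lt_rpow_iff (by positivity) hc hp,
    Real.mul_rpow ht.le hap.le, ← Real.rpow_mul ha0.le,
    one_div_mul_cancel hp.ne', Real.rpow_one, ← lt_div_iff₀' (Real.rpow_pos_of_pos ht p)]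

lemma ceil_sub_one_le {r : ℝ} (hr : 0 ≤ r) : (⌈r - 1⌉₊ : ℝ) ≤ r := by
  rcases le_or_gt r 1 with h | h
  · rw [Nat.ceil_eq_zero.mpr (by linarith)]; exact_mod_cast hr
  · have := Nat.ceil_lt_add_one (a := r - 1) (by linarith)
    linarith

open Filter in
lemma sup_ofReal_sub (c : ℝ) :
    ⨆ k : ℕ, ENNReal.ofReal (c - ((k:ℝ)+1)⁻¹) = ENNReal.ofReal c := by
  have hmono : Monotone fun k : ℕ => ENNReal.ofReal (c - ((k:ℝ)+1)⁻¹) := by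
    intro i j hij
    apply ENNReal.ofReal_le_ofReal
    have h1 : ((j:ℝ)+1)⁻¹ ≤ ((i:ℝ)+1)⁻¹ := by
      apply inv_anti₀ (by positivity)
      have : (i:ℝ) ≤ j := by exact_mod_cast hij
      linarith
    linarith
  have h1 : Tendsto (fun k : ℕ => ENNReal.ofReal (c - ((k:ℝ)+1)⁻¹)) atTop
      (nhds (ENNReal.ofReal c)) := by
    apply (ENNReal.continuous_ofReal.tendsto c).comp
    have h2 : Tendsto (fun k : ℕ => ((k:ℝ)+1)⁻¹) atTop (nhds 0) := by
      simpa [one_div] using tendsto_one_div_add_atTop_nhds_zero_nat (𝕜 := ℝ)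
    simpa using tendsto_const_nhds.sub h2
  exact tendsto_nhds_unique (tendsto_atTop_iSup hmono) h1


open Filter in
/-- The discrete embedding: `S_p f(ω', n) = n^{-1/p} f(ω')` (with `n` ranging over the
positive integers, here encoded as `n+1` for `n : ℕ`) satisfies
`‖S_p f‖_{p,∞} = ‖f‖_p` and `m'(|S_p f| > t) = ∫ #{n ≥ 1 : n < |f|^p/t^p} dμ'`. -/
theorem Sp_isometric_weakLp {Ω' : Type*} [MeasurableSpace Ω'] (μ' : Measure Ω')
    (p : ℝ) (hp : 0 < p) (f : Ω' → ℝ) (hmeas : Measurable f)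
    (hf : MemLp f (ENNReal.ofReal p) μ') :
    wLpNorm (μ'.prod (Measure.count : Measure ℕ)) p
        (fun z => ((z.2 : ℝ) + 1) ^ (-(1/p) : ℝ) * f z.1) = LpNormR μ' p f ∧
    ∀ t > 0, (μ'.prod (Measure.count : Measure ℕ))
        {z : Ω' × ℕ | t < |((z.2 : ℝ) + 1) ^ (-(1/p) : ℝ) * f z.1|} =
      ∫⁻ ω', (Measure.count : Measure ℕ)
        {n : ℕ | ((n : ℝ) + 1) < |f ω'| ^ p / t ^ p} ∂μ' := by
  haveI : SFinite (Measure.count : Measure ℕ) := by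
    unfold Measure.count; infer_instance
  have hg : Measurable fun z : Ω' × ℕ => ((z.2 : ℝ) + 1) ^ (-(1/p) : ℝ) * f z.1 :=
    ((measurable_from_top (f := fun n : ℕ => ((n:ℝ)+1) ^ (-(1/p) : ℝ))).comp
      measurable_snd).mul (hmeas.comp measurable_fst)
  have part2 : ∀ t > (0:ℝ), (μ'.prod (Measure.count : Measure ℕ))
      {z : Ω' × ℕ | t < |((z.2 : ℝ) + 1) ^ (-(1/p) : ℝ) * f z.1|} =
      ∫⁻ ω', (Measure.count : Measure ℕ)
        {n : ℕ | ((n : ℝ) + 1) < |f ω'| ^ p / t ^ p} ∂μ' := by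
    intro t ht
    rw [Measure.prod_apply (measurableSet_lt measurable_const hg.abs)]
    refine lintegral_congr fun ω' => ?_
    congr 1
    ext n
    have hpos : (0:ℝ) < ((n:ℝ)+1) ^ (-(1/p) : ℝ) := Real.rpow_pos_of_pos (by positivity) _
    simp only [Set.mem_preimage, Set.mem_setOf_eq, abs_mul, abs_of_pos hpos]
    exact pt_iff p hp t ht _ (abs_nonneg _) n
  refine ⟨?_, part2⟩
  -- Part 1
  set I : ℝ≥0∞ := ∫⁻ x, ENNReal.ofReal (|f x| ^ p) ∂μ' with hI
  have hceil_meas : ∀ t : ℝ, Measurable fun ω' => ((⌈|f ω'| ^ p / t ^ p - 1⌉₊ : ℕ) : ℝ≥0∞) := by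
    intro t
    exact (measurable_from_top (f := fun n : ℕ => (n : ℝ≥0∞))).comp
      (Nat.measurable_ceil.comp (((((Real.continuous_rpow_const hp.le).measurable.comp hmeas.abs)).div_const _).sub_const _))
  have hM : ∀ t > (0:ℝ), (μ'.prod (Measure.count : Measure ℕ))
      {z : Ω' × ℕ | t < |((z.2 : ℝ) + 1) ^ (-(1/p) : ℝ) * f z.1|} =
      ∫⁻ ω', ((⌈|f ω'| ^ p / t ^ p - 1⌉₊ : ℕ) : ℝ≥0∞) ∂μ' := by
    intro t ht
    rw [part2 t ht]
    exact lintegral_congr fun ω' => count_lt_set _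
  -- key algebraic identity: (ofReal t * M^{1/p})^p = ofReal (t^p) * M
  have hpow : ∀ (t : ℝ), 0 < t → ∀ M : ℝ≥0∞,
      (ENNReal.ofReal t * M ^ (1/p)) ^ p = ENNReal.ofReal (t ^ p) * M := by
    intro t ht M
    rw [ENNReal.mul_rpow_of_nonneg _ _ hp.le, ← ENNReal.rpow_mul,
      one_div_mul_cancel hp.ne', ENNReal.rpow_one, ENNReal.ofReal_rpow_of_pos ht]
  have hupper : ∀ t > (0:ℝ),
      ENNReal.ofReal (t ^ p) * (∫⁻ ω', ((⌈|f ω'| ^ p / t ^ p - 1⌉₊ : ℕ) : ℝ≥0∞) ∂μ') ≤ I := by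
    intro t ht
    rw [← lintegral_const_mul _ (hceil_meas t)]
    refine lintegral_mono fun ω' => ?_
    have htp : (0:ℝ) < t ^ p := Real.rpow_pos_of_pos ht p
    have hc : (0:ℝ) ≤ |f ω'| ^ p := Real.rpow_nonneg (abs_nonneg _) _
    rw [← ENNReal.ofReal_natCast, ← ENNReal.ofReal_mul htp.le]
    apply ENNReal.ofReal_le_ofReal
    have h1 : (⌈|f ω'| ^ p / t ^ p - 1⌉₊ : ℝ) ≤ |f ω'| ^ p / t ^ p :=
      ceil_sub_one_le (by positivity)
    calc t ^ p * (⌈|f ω'| ^ p / t ^ p - 1⌉₊ : ℝ) ≤ t ^ p * (|f ω'| ^ p / t ^ p) := by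
          exact mul_le_mul_of_nonneg_left h1 htp.le
      _ = |f ω'| ^ p := by field_simp
  have hlower : ∀ t > (0:ℝ),
      (∫⁻ x, ENNReal.ofReal (|f x| ^ p - t ^ p) ∂μ') ≤
      ENNReal.ofReal (t ^ p) * (∫⁻ ω', ((⌈|f ω'| ^ p / t ^ p - 1⌉₊ : ℕ) : ℝ≥0∞) ∂μ') := by
    intro t ht
    rw [← lintegral_const_mul _ (hceil_meas t)]
    refine lintegral_mono fun ω' => ?_
    have htp : (0:ℝ) < t ^ p := Real.rpow_pos_of_pos ht p
    rw [← ENNReal.ofReal_natCast, ← ENNReal.ofReal_mul htp.le]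
    apply ENNReal.ofReal_le_ofReal
    have h1 : |f ω'| ^ p / t ^ p - 1 ≤ (⌈|f ω'| ^ p / t ^ p - 1⌉₊ : ℝ) := Nat.le_ceil _
    have h2 : t ^ p * (|f ω'| ^ p / t ^ p - 1) ≤ t ^ p * (⌈|f ω'| ^ p / t ^ p - 1⌉₊ : ℝ) :=
      mul_le_mul_of_nonneg_left h1 htp.le
    have h3 : t ^ p * (|f ω'| ^ p / t ^ p - 1) = |f ω'| ^ p - t ^ p := by field_simp
    linarith
  -- the supremum
  rw [wLpNorm, LpNormR]
  apply le_antisymm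
  · apply iSup_le
    rintro ⟨t, ht⟩
    simp only [Set.mem_Ioi] at ht
    have h1 : (ENNReal.ofReal t *
        ((μ'.prod (Measure.count : Measure ℕ))
          {z : Ω' × ℕ | t < |((z.2 : ℝ) + 1) ^ (-(1/p) : ℝ) * f z.1|}) ^ (1/p)) ^ p ≤ I := by
      rw [hpow t ht, hM t ht]
      exact hupper t ht
    calc ENNReal.ofReal t * (_ : ℝ≥0∞) ^ (1/p)
        = ((ENNReal.ofReal t * _ ^ (1/p)) ^ p) ^ (1/p) := by
          rw [← ENNReal.rpow_mul, mul_one_div_cancel hp.ne', ENNReal.rpow_one]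
      _ ≤ I ^ (1/p) := ENNReal.rpow_le_rpow h1 (by positivity)
  · -- lower bound via monotone convergence with t_k = ((k+1)⁻¹)^(1/p)
    set tk : ℕ → ℝ := fun k => (((k:ℝ)+1)⁻¹) ^ (1/p : ℝ) with htk
    have htk_pos : ∀ k, 0 < tk k := fun k => Real.rpow_pos_of_pos (by positivity) _
    have htk_pow : ∀ k, tk k ^ p = ((k:ℝ)+1)⁻¹ := by
      intro k
      rw [htk, ← Real.rpow_mul (by positivity), one_div_mul_cancel hp.ne', Real.rpow_one]
    have hIeq : I = ⨆ k : ℕ, ∫⁻ x, ENNReal.ofReal (|f x| ^ p - ((k:ℝ)+1)⁻¹) ∂μ' := by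
      rw [← lintegral_iSup]
      · exact lintegral_congr fun x => (sup_ofReal_sub _).symm
      · intro k
        exact ((((Real.continuous_rpow_const hp.le).measurable.comp hmeas.abs)).sub_const _).ennreal_ofReal
      · intro i j hij x
        apply ENNReal.ofReal_le_ofReal
        have h1 : ((j:ℝ)+1)⁻¹ ≤ ((i:ℝ)+1)⁻¹ := by
          apply inv_anti₀ (by positivity)
          have : (i:ℝ) ≤ j := by exact_mod_cast hij
          linarith
        linarith
    have hle : I ≤ (⨆ t : Set.Ioi (0:ℝ), ENNReal.ofReal t.1 *
        ((μ'.prod (Measure.count : Measure ℕ))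
          {z : Ω' × ℕ | t.1 < |((z.2 : ℝ) + 1) ^ (-(1/p) : ℝ) * f z.1|}) ^ (1/p)) ^ p := by
      rw [hIeq]
      apply iSup_le
      intro k
      have h1 : (∫⁻ x, ENNReal.ofReal (|f x| ^ p - ((k:ℝ)+1)⁻¹) ∂μ') ≤
          (ENNReal.ofReal (tk k) *
            ((μ'.prod (Measure.count : Measure ℕ))
              {z : Ω' × ℕ | tk k < |((z.2 : ℝ) + 1) ^ (-(1/p) : ℝ) * f z.1|}) ^ (1/p)) ^ p := by
        rw [hpow _ (htk_pos k), hM _ (htk_pos k)]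
        have := hlower (tk k) (htk_pos k)
        rw [htk_pow k] at this ⊢
        exact this
      refine h1.trans (ENNReal.rpow_le_rpow ?_ hp.le)
      exact le_iSup_of_le ⟨tk k, htk_pos k⟩ le_rfl
    calc I ^ (1/p) ≤ ((⨆ t : Set.Ioi (0:ℝ), ENNReal.ofReal t.1 *
          ((μ'.prod (Measure.count : Measure ℕ))
            {z : Ω' × ℕ | t.1 < |((z.2 : ℝ) + 1) ^ (-(1/p) : ℝ) * f z.1|}) ^ (1/p)) ^ p) ^ (1/p) :=
        ENNReal.rpow_le_rpow hle (by positivity)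
      _ = _ := by rw [← ENNReal.rpow_mul, mul_one_div_cancel hp.ne', ENNReal.rpow_one]
end
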